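/- arXiv:2501.07693 — 13 statements merged into one kernel-verified Lean document; each statement's English description precedes it below -/
import Mathlib

section
/- Let A ⊆ ℝⁿ be a nonempty closed set that is not a singleton and is a proper subset of ℝⁿ, and let r > 0. Then A is r-strongly convex if and only if A is r-spherically supported and the interior of A is nonempty. -/
open scoped RealInnerProductSpace

variable {E : Type*} [NormedAddCommGroup E] [InnerProductSpace ℝ E]

/-- The proximal normal cone to `A` at `a`. -/
def proxNormalCone (A : Set E) (a : E) : Set E :=
  {ζ : E | ∃ σ : ℝ, 0 ≤ σ ∧ ∀ x ∈ A, ⟪ζ, x - a⟫ ≤ σ * ‖x - a‖ ^ 2}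

/-- `A` is `r`-strongly convex: it is the intersection of a nonempty family of
closed balls of radius `r`. -/
def IsStronglyConvex (r : ℝ) (A : Set E) : Prop :=
  ∃ C : Set E, C.Nonempty ∧ A = ⋂ c ∈ C, Metric.closedBall c r

/-- `A` is `r`-spherically supported. -/
def IsSphericallySupported (r : ℝ) (A : Set E) : Prop :=
  ∀ a ∈ frontier A, ∃ ζ ∈ proxNormalCone A a, ζ ≠ 0 ∧
    ∀ x ∈ A, ⟪‖ζ‖⁻¹ • ζ, x - a⟫ ≤ -(1 / (2 * r)) * ‖x - a‖ ^ 2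

/-- `A` is epi-Lipschitz (wedged). -/
def IsEpiLipschitz (A : Set E) : Prop :=
  ∀ a ∈ frontier A, ∃ v : E, ∃ ε : ℝ, 0 < ε ∧
    ∀ a' ∈ A, ‖a' - a‖ < ε → ∀ t : ℝ, 0 ≤ t → t < ε →
      ∀ w : E, ‖w - v‖ < ε → a' + t • w ∈ A

/-- The set of farthest points of `A` from `x`. -/
def farPoints (A : Set E) (x : E) : Set E :=
  {a : E | a ∈ A ∧ ∀ b ∈ A, ‖x - b‖ ≤ ‖x - a‖}

/-- `E_r(A)`: the set of points whose farthest distance to `A` exceeds `r`. -/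
def farExceeds (r : ℝ) (A : Set E) : Set E := {x : E | ∃ a ∈ A, r < ‖x - a‖}

/-- `A` is `r`-negatively `S`-convex. -/
def IsNegSConvex (r : ℝ) (S A : Set E) : Prop :=
  ¬ ∃ a ∈ frontier A, ∃ a' ∈ frontier A, a ≠ a' ∧
      ∃ ζ ∈ proxNormalCone A a, ‖ζ‖ = 1 ∧
        ∃ ζ' ∈ proxNormalCone A a', ‖ζ'‖ = 1 ∧
          ∃ t : ℝ, r < t ∧ ∃ t' : ℝ, r < t' ∧
            a - t • ζ = a' - t' • ζ' ∧ a - t • ζ ∈ S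

/-- `A` satisfies the exterior `r`-sphere condition. -/
def SatisfiesExtSphere (r : ℝ) (A : Set E) : Prop :=
  ∀ a ∈ frontier A, ∃ ζ ∈ proxNormalCone A a, ζ ≠ 0 ∧
    ∀ x ∈ A, ⟪‖ζ‖⁻¹ • ζ, x - a⟫ ≤ (1 / (2 * r)) * ‖x - a‖ ^ 2

/-- `A` is `r`-prox-regular. -/
def IsProxRegular (r : ℝ) (A : Set E) : Prop :=
  ∀ a ∈ frontier A, ∀ ζ ∈ proxNormalCone A a, ζ ≠ 0 →
    ∀ x ∈ A, ⟪‖ζ‖⁻¹ • ζ, x - a⟫ ≤ (1 / (2 * r)) * ‖x - a‖ ^ 2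

/-- spherical support inequality yields an enclosing ball of radius `r` touching at `a`. -/
lemma aux_support_ball {r : ℝ} (hr : 0 < r) {A : Set E} {a ζ : E} (hζ0 : ζ ≠ 0)
    (hineq : ∀ x ∈ A, ⟪‖ζ‖⁻¹ • ζ, x - a⟫ ≤ -(1 / (2 * r)) * ‖x - a‖ ^ 2) :
    ∃ c, dist a c = r ∧ ∀ x ∈ A, dist x c ≤ r := by
  set u : E := ‖ζ‖⁻¹ • ζ with hu_def
  have hu : ‖u‖ = 1 := norm_smul_inv_norm hζ0
  refine ⟨a - r • u, ?_, ?_⟩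
  · have : a - (a - r • u) = r • u := by abel
    rw [dist_eq_norm, this, norm_smul, hu, Real.norm_eq_abs, abs_of_pos hr, mul_one]
  · intro x hx
    have hxc : x - (a - r • u) = (x - a) + r • u := by abel
    have hsq : ‖x - (a - r • u)‖ ^ 2 = ‖x - a‖ ^ 2 + 2 * ⟪x - a, r • u⟫ + ‖r • u‖ ^ 2 := by
      rw [hxc, norm_add_sq_real]
    have hinner : ⟪x - a, r • u⟫ = r * ⟪u, x - a⟫ := by
      rw [real_inner_smul_right, real_inner_comm]
    have h1 := hineq x hx
    have h2 : r * ⟪u, x - a⟫ ≤ -(1/2) * ‖x - a‖ ^ 2 := by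
      have := mul_le_mul_of_nonneg_left h1 hr.le
      calc r * ⟪u, x - a⟫ ≤ r * (-(1 / (2 * r)) * ‖x - a‖ ^ 2) := this
        _ = -(1/2) * ‖x - a‖ ^ 2 := by field_simp
    have hnu : ‖r • u‖ ^ 2 = r ^ 2 := by
      rw [norm_smul, hu, Real.norm_eq_abs, abs_of_pos hr, mul_one]
    have hle2 : ‖x - (a - r • u)‖ ^ 2 ≤ r ^ 2 := by
      rw [hsq, hinner, hnu]; nlinarith
    rw [dist_eq_norm]
    nlinarith [norm_nonneg (x - (a - r • u))]

/-- from a touching enclosing ball, get the spherical support data at `a`. -/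
lemma aux_ball_support {r : ℝ} (hr : 0 < r) {A : Set E} {a c : E}
    (hac : dist a c = r) (hball : ∀ x ∈ A, dist x c ≤ r) :
    ∃ ζ ∈ proxNormalCone A a, ζ ≠ 0 ∧
      ∀ x ∈ A, ⟪‖ζ‖⁻¹ • ζ, x - a⟫ ≤ -(1 / (2 * r)) * ‖x - a‖ ^ 2 := by
  have hacn : ‖a - c‖ = r := by rw [← dist_eq_norm]; exact hac
  have hζ0 : a - c ≠ 0 := by
    intro h
    rw [h, norm_zero] at hacn
    exact hr.ne hacn
  have key : ∀ x ∈ A, ⟪a - c, x - a⟫ ≤ -(1/2) * ‖x - a‖ ^ 2 := by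
    intro x hx
    have hxc : ‖x - c‖ ≤ r := by rw [← dist_eq_norm]; exact hball x hx
    have hdecomp : x - a = (x - c) - (a - c) := by abel
    have h1 : ‖x - a‖ ^ 2 = ‖x - c‖ ^ 2 - 2 * ⟪x - c, a - c⟫ + ‖a - c‖ ^ 2 := by
      rw [hdecomp, norm_sub_sq_real]
    have h2 : ⟪a - c, x - a⟫ = ⟪a - c, x - c⟫ - ⟪a - c, a - c⟫ := by
      rw [hdecomp, inner_sub_right]
    have h3 : ⟪a - c, a - c⟫ = ‖a - c‖ ^ 2 := real_inner_self_eq_norm_sq _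
    have h4 : ⟪a - c, x - c⟫ = ⟪x - c, a - c⟫ := real_inner_comm _ _
    have h5 : ‖x - c‖ ^ 2 ≤ r ^ 2 := by nlinarith [norm_nonneg (x - c)]
    rw [h2, h3, h4, hacn]
    nlinarith
  refine ⟨a - c, ⟨0, le_refl 0, fun x hx => ?_⟩, hζ0, fun x hx => ?_⟩
  · have h := key x hx
    have h0 : (0:ℝ) * ‖x - a‖ ^ 2 = 0 := by ring
    rw [h0]
    linarith [sq_nonneg ‖x - a‖]
  · rw [real_inner_smul_left, hacn]
    have := key x hx
    calc r⁻¹ * ⟪a - c, x - a⟫ ≤ r⁻¹ * (-(1/2) * ‖x - a‖ ^ 2) :=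
          mul_le_mul_of_nonneg_left this (inv_nonneg.2 hr.le)
      _ = -(1 / (2 * r)) * ‖x - a‖ ^ 2 := by
            have hrne : r ≠ 0 := hr.ne'
            field_simp

theorem statement_0 {n : ℕ} (A : Set (EuclideanSpace ℝ (Fin n)))
    (hne : A.Nonempty) (hcl : IsClosed A) (hns : ¬ ∃ x, A = {x})
    (hproper : A ≠ Set.univ) (r : ℝ) (hr : 0 < r) :
    IsStronglyConvex r A ↔ IsSphericallySupported r A ∧ (interior A).Nonempty := by
  obtain ⟨a₀, ha₀⟩ := hne
  obtain ⟨y₀, hy₀⟩ : ∃ y, y ∉ A := by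
    by_contra h
    push_neg at h
    exact hproper (Set.eq_univ_of_forall h)
  have hnontriv : Nontrivial (EuclideanSpace ℝ (Fin n)) :=
    ⟨a₀, y₀, fun h => hy₀ (h ▸ ha₀)⟩
  constructor
  · rintro ⟨C, hCne, hAeq⟩
    have hCsub : ∀ c ∈ C, ∀ x ∈ A, dist x c ≤ r := by
      intro c hc x hx
      rw [hAeq] at hx
      exact Set.mem_iInter₂.1 hx c hc
    -- interior nonempty
    obtain ⟨b₀, hb₀, hb₀ne⟩ : ∃ b ∈ A, b ≠ a₀ := by
      by_contra h
      push_neg at h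
      exact hns ⟨a₀, Set.eq_singleton_iff_unique_mem.2 ⟨ha₀, h⟩⟩
    have hintne : (interior A).Nonempty := by
      set m : EuclideanSpace ℝ (Fin n) := (2:ℝ)⁻¹ • (a₀ + b₀) with hm_def
      set s2 : ℝ := ‖a₀ - b₀‖ ^ 2 / 4 with hs2_def
      have hs2pos : 0 < s2 := by
        have : 0 < ‖a₀ - b₀‖ := norm_pos_iff.2 (sub_ne_zero.2 (Ne.symm hb₀ne))
        positivity
      set t : ℝ := Real.sqrt (r ^ 2 - s2) with ht_def
      have hmc : ∀ c ∈ C, ‖m - c‖ ≤ t := by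
        intro c hc
        have ha' : ‖a₀ - c‖ ≤ r := by rw [← dist_eq_norm]; exact hCsub c hc a₀ ha₀
        have hb' : ‖b₀ - c‖ ≤ r := by rw [← dist_eq_norm]; exact hCsub c hc b₀ hb₀
        have hdecomp : m - c = (2:ℝ)⁻¹ • ((a₀ - c) + (b₀ - c)) := by
          rw [hm_def]; module
        have hpar : ‖(a₀ - c) + (b₀ - c)‖ ^ 2 =
            2 * ‖a₀ - c‖ ^ 2 + 2 * ‖b₀ - c‖ ^ 2 - ‖(a₀ - c) - (b₀ - c)‖ ^ 2 := by
          have e1 := norm_add_sq_real (a₀ - c) (b₀ - c)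
          have e2 := norm_sub_sq_real (a₀ - c) (b₀ - c)
          linarith
        have hab : (a₀ - c) - (b₀ - c) = a₀ - b₀ := by abel
        have hmc2 : ‖m - c‖ ^ 2 ≤ r ^ 2 - s2 := by
          have hnorm : ‖m - c‖ = |(2:ℝ)⁻¹| * ‖(a₀ - c) + (b₀ - c)‖ := by
            rw [hdecomp, norm_smul, Real.norm_eq_abs]
          rw [hab] at hpar
          have h1 : ‖m - c‖ ^ 2 = (1/4) * ‖(a₀ - c) + (b₀ - c)‖ ^ 2 := by
            rw [hnorm, abs_of_pos (by norm_num : (0:ℝ) < (2:ℝ)⁻¹)]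
            ring
          rw [h1, hpar, hs2_def]
          nlinarith [norm_nonneg (a₀ - c), norm_nonneg (b₀ - c)]
        calc ‖m - c‖ = Real.sqrt (‖m - c‖ ^ 2) := by
              rw [Real.sqrt_sq (norm_nonneg _)]
          _ ≤ t := Real.sqrt_le_sqrt hmc2
      have htr : t < r := by
        rw [ht_def]
        exact (Real.sqrt_lt' hr).2 (by nlinarith)
      refine ⟨m, ?_⟩
      rw [mem_interior]
      refine ⟨Metric.ball m (r - t), ?_, Metric.isOpen_ball, Metric.mem_ball_self (by linarith)⟩
      intro z hz
      rw [hAeq]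
      refine Set.mem_iInter₂.2 fun c hc => ?_
      have h1 : dist z m < r - t := hz
      have h2 : dist m c ≤ t := by rw [dist_eq_norm]; exact hmc c hc
      rw [Metric.mem_closedBall]
      calc dist z c ≤ dist z m + dist m c := dist_triangle z m c
        _ ≤ (r - t) + t := by linarith
        _ = r := by ring
    refine ⟨?_, hintne⟩
    -- spherically supported
    intro a ha
    have haA : a ∈ A := hcl.frontier_subset ha
    set K : Set (EuclideanSpace ℝ (Fin n)) := ⋂ x ∈ A, Metric.closedBall x r with hK_def
    have hKmem : ∀ c, c ∈ K ↔ ∀ x ∈ A, dist c x ≤ r := by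
      intro c; simp [hK_def, Metric.mem_closedBall]
    have hCK : C ⊆ K := by
      intro c hc
      rw [hKmem]
      intro x hx
      rw [dist_comm]; exact hCsub c hc x hx
    have hKne : K.Nonempty := hCne.mono hCK
    have hKsub : K ⊆ Metric.closedBall a r := by
      intro c hc
      rw [Metric.mem_closedBall]
      exact (hKmem c).1 hc a haA
    have hKclosed : IsClosed K :=
      isClosed_biInter fun x _ => Metric.isClosed_closedBall
    have hKcompact : IsCompact K :=
      (isCompact_closedBall a r).of_isClosed_subset hKclosed hKsub
    obtain ⟨c₀, hc₀K, hmax⟩ :=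
      hKcompact.exists_isMaxOn hKne ((continuous_const.dist continuous_id).continuousOn :
        ContinuousOn (fun c => dist a c) K)
    have hc₀le : dist a c₀ ≤ r := by
      rw [dist_comm]; exact (hKmem c₀).1 hc₀K a haA
    have hc₀eq : dist a c₀ = r := by
      by_contra hne'
      have hlt : dist a c₀ < r := lt_of_le_of_ne hc₀le hne'
      have : a ∈ interior A := by
        rw [mem_interior]
        refine ⟨Metric.ball a (r - dist a c₀), ?_, Metric.isOpen_ball,
          Metric.mem_ball_self (by linarith)⟩
        intro z hz
        rw [hAeq]
        refine Set.mem_iInter₂.2 fun c hc => ?_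
        have h1 : dist z a < r - dist a c₀ := hz
        have h2 : dist a c ≤ dist a c₀ := hmax (hCK hc)
        rw [Metric.mem_closedBall]
        have : dist z c < r :=
          calc dist z c ≤ dist z a + dist a c := dist_triangle z a c
            _ < (r - dist a c₀) + dist a c₀ := by linarith
            _ = r := by ring
        exact this.le
      exact ha.2 this
    exact aux_ball_support hr hc₀eq (fun x hx => by
      rw [dist_comm]; exact (hKmem c₀).1 hc₀K x hx)
  · rintro ⟨hsph, hint⟩
    -- frontier nonempty
    have hPre : PreconnectedSpace (EuclideanSpace ℝ (Fin n)) := inferInstance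
    have hfrne : (frontier A).Nonempty := by
      by_contra h
      rw [Set.not_nonempty_iff_eq_empty] at h
      have hfr0 : A \ interior A = ∅ := by rw [← hcl.frontier_eq, h]
      have hsub : A ⊆ interior A := by
        intro x hx
        by_contra hx'
        exact Set.eq_empty_iff_forall_notMem.1 hfr0 x ⟨hx, hx'⟩
      have hopen : IsOpen A := by
        have : interior A = A := Set.Subset.antisymm interior_subset hsub
        rw [← this]; exact isOpen_interior
      rcases isClopen_iff.1 ⟨hcl, hopen⟩ with h1 | h1
      · rw [h1] at ha₀; exact ha₀
      · exact hproper h1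
    -- supporting balls at frontier points
    have hsupp : ∀ a ∈ frontier A, ∃ c, dist a c = r ∧ ∀ x ∈ A, dist x c ≤ r := by
      intro a ha
      obtain ⟨ζ, _, hζ0, hineq⟩ := hsph a ha
      exact aux_support_ball hr hζ0 hineq
    set K : Set (EuclideanSpace ℝ (Fin n)) := ⋂ x ∈ A, Metric.closedBall x r with hK_def
    have hKmem : ∀ c, c ∈ K ↔ ∀ x ∈ A, dist c x ≤ r := by
      intro c; simp [hK_def, Metric.mem_closedBall]
    have hKne : K.Nonempty := by
      obtain ⟨a, ha⟩ := hfrne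
      obtain ⟨c, _, hc2⟩ := hsupp a ha
      exact ⟨c, (hKmem c).2 fun x hx => by rw [dist_comm]; exact hc2 x hx⟩
    set A' : Set (EuclideanSpace ℝ (Fin n)) := ⋂ c ∈ K, Metric.closedBall c r with hA'_def
    have hAA' : A ⊆ A' := by
      intro x hx
      refine Set.mem_iInter₂.2 fun c hc => ?_
      rw [Metric.mem_closedBall, dist_comm]
      exact (hKmem c).1 hc x hx
    have hA'conv : Convex ℝ A' :=
      convex_iInter fun c => convex_iInter fun _ => convex_closedBall c r
    have hA'closed : IsClosed A' := isClosed_biInter fun c _ => Metric.isClosed_closedBall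
    -- frontier A ⊆ frontier A'
    have hfrsub : ∀ a ∈ frontier A, a ∉ interior A' := by
      intro a ha hint'
      obtain ⟨c, hc1, hc2⟩ := hsupp a ha
      have hcK : c ∈ K := (hKmem c).2 fun x hx => by rw [dist_comm]; exact hc2 x hx
      have hsub : A' ⊆ Metric.closedBall c r := Set.biInter_subset_of_mem hcK
      have : a ∈ Metric.ball c r := by
        rw [← interior_closedBall c hr.ne']
        exact interior_mono hsub hint'
      rw [Metric.mem_ball] at this
      exact (ne_of_lt this) hc1
    -- interior A' ⊆ interior A via connectedness
    have hTS : interior A' ⊆ interior A := by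
      have hT : IsPreconnected (interior A') := hA'conv.interior.isPreconnected
      refine hT.subset_of_closure_inter_subset isOpen_interior ?_ ?_
      · obtain ⟨x₀, hx₀⟩ := hint
        exact ⟨x₀, interior_mono hAA' hx₀, hx₀⟩
      · intro x hx
        obtain ⟨hx1, hx2⟩ := hx
        have hxA : x ∈ A := by
          have : x ∈ closure A := closure_mono interior_subset hx1
          rwa [hcl.closure_eq] at this
        by_cases hxi : x ∈ interior A
        · exact hxi
        · exfalso
          have : x ∈ frontier A := hcl.frontier_eq ▸ (Set.mem_diff x).2 ⟨hxA, hxi⟩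
          exact hfrsub x this hx2
    -- A' ⊆ A
    have hA'A : A' ⊆ A := by
      intro y hy
      obtain ⟨x₀, hx₀⟩ := hint
      have hx₀' : x₀ ∈ interior A' := interior_mono hAA' hx₀
      have hy' : y ∈ closure A' := subset_closure hy
      have hmem : ∀ t : ℝ, t ∈ Set.Ioc (0:ℝ) 1 → t • x₀ + (1 - t) • y ∈ A := by
        intro t ht
        have h := hA'conv.combo_interior_closure_mem_interior (a := t) (b := 1 - t)
          hx₀' hy' ht.1 (by linarith [ht.2]) (by ring)
        exact interior_subset (hTS h)
      have hne' : (nhdsWithin (0:ℝ) (Set.Ioc 0 1)).NeBot := by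
        rw [← mem_closure_iff_nhdsWithin_neBot, closure_Ioc (one_ne_zero).symm]
        exact ⟨le_refl 0, zero_le_one⟩
      have htend : Filter.Tendsto (fun t : ℝ => t • x₀ + (1 - t) • y)
          (nhdsWithin 0 (Set.Ioc 0 1)) (nhds y) := by
        have hc : Continuous fun t : ℝ => t • x₀ + (1 - t) • y :=
          (continuous_id.smul continuous_const).add
            ((continuous_const.sub continuous_id).smul continuous_const)
        have h1 := hc.tendsto 0
        simp only [zero_smul, sub_zero, one_smul, zero_add] at h1
        exact h1.mono_left nhdsWithin_le_nhds
      exact hcl.mem_of_tendsto htend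
        (by filter_upwards [self_mem_nhdsWithin] using fun t ht => hmem t ht)
    exact ⟨K, hKne, Set.Subset.antisymm hAA' hA'A⟩
end

section
/- Let A ⊆ ℝⁿ be a nonempty closed set that is not a singleton and is a proper subset of ℝⁿ, and let r > 0. Then A is r-strongly convex if and only if A is epi-Lipschitz and r-spherically supported. -/
open scoped RealInnerProductSpace

variable {E : Type*} [NormedAddCommGroup E] [InnerProductSpace ℝ E]

section AuxLemmas

lemma aux_support_ball_s1 {A : Set E} {r : ℝ} (hr : 0 < r) {a u : E} (hu : ‖u‖ = 1)
    (h : ∀ x ∈ A, ⟪u, x - a⟫ ≤ -(1 / (2 * r)) * ‖x - a‖ ^ 2) :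
    A ⊆ Metric.closedBall (a - r • u) r := by
  intro x hx
  have hkey := h x hx
  have hexp : ‖x - (a - r • u)‖ ^ 2 = ‖x - a‖ ^ 2 + 2 * (r * ⟪u, x - a⟫) + r ^ 2 := by
    have e : x - (a - r • u) = (x - a) + r • u := by abel
    rw [e, norm_add_sq_real, real_inner_smul_right, real_inner_comm, norm_smul,
      Real.norm_eq_abs, abs_of_pos hr, hu]
    ring
  have h2 : 2 * (r * ⟪u, x - a⟫) ≤ -‖x - a‖ ^ 2 := by
    have := mul_le_mul_of_nonneg_left hkey (by positivity : (0:ℝ) ≤ 2 * r)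
    have hr' : r ≠ 0 := hr.ne'
    rw [show (2 * r) * (-(1 / (2 * r)) * ‖x - a‖ ^ 2) = -‖x - a‖ ^ 2 by
      field_simp] at this
    linarith
  have hsq : ‖x - (a - r • u)‖ ^ 2 ≤ r ^ 2 := by rw [hexp]; nlinarith [sq_nonneg ‖x - a‖]
  have hnn : (0:ℝ) ≤ ‖x - (a - r • u)‖ := norm_nonneg _
  rw [Metric.mem_closedBall, dist_eq_norm]
  nlinarith

lemma aux_mem_closure_interior {s : Set E} (hs : Convex ℝ s) {x₀ : E}
    (hx : x₀ ∈ interior s) {y : E} (hy : y ∈ s) : y ∈ closure (interior s) := by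
  set t : ℕ → ℝ := fun k => 1 / (k + 1) with ht
  have h0 : Filter.Tendsto t Filter.atTop (nhds 0) := tendsto_one_div_add_atTop_nhds_zero_nat
  have htend : Filter.Tendsto (fun k : ℕ => t k • x₀ + (1 - t k) • y)
      Filter.atTop (nhds y) := by
    have := (h0.smul_const x₀).add ((h0.const_sub 1).smul_const y)
    simpa using this
  refine mem_closure_of_tendsto htend (Filter.Eventually.of_forall fun k => ?_)
  have hk : 0 < t k := by simp only [ht]; positivity
  have hk1 : t k ≤ 1 := by
    simp only [ht]
    rw [div_le_one (by positivity)]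
    linarith [Nat.cast_nonneg (α := ℝ) k]
  exact hs.combo_interior_self_mem_interior hx hy hk (by linarith) (by ring)

end AuxLemmas

theorem statement_1 {n : ℕ} (A : Set (EuclideanSpace ℝ (Fin n)))
    (hne : A.Nonempty) (hcl : IsClosed A) (hns : ¬ ∃ x, A = {x})
    (hproper : A ≠ Set.univ) (r : ℝ) (hr : 0 < r) :
    IsStronglyConvex r A ↔ IsEpiLipschitz A ∧ IsSphericallySupported r A := by
  constructor
  · -- strongly convex → epi-Lipschitz ∧ spherically supported
    rintro ⟨C, ⟨c₀, hc₀⟩, hCA⟩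
    have hball : ∀ c ∈ C, A ⊆ Metric.closedBall c r := by
      intro c hc x hx
      rw [hCA] at hx
      exact Set.mem_iInter₂.mp hx c hc
    have hAconv : Convex ℝ A := by
      rw [hCA]; exact convex_iInter₂ fun c _ => convex_closedBall c r
    obtain ⟨p, hp⟩ := hne
    obtain ⟨q, hq, hpq⟩ : ∃ q ∈ A, q ≠ p := by
      by_contra h
      push_neg at h
      exact hns ⟨p, Set.eq_singleton_iff_unique_mem.mpr ⟨hp, h⟩⟩
    set m : EuclideanSpace ℝ (Fin n) := midpoint ℝ p q with hm
    set δ : ℝ := ‖p - q‖ ^ 2 / 4 with hδdef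
    have hpq' : p - q ≠ 0 := sub_ne_zero.mpr (fun h => hpq h.symm)
    have hδ : 0 < δ := by
      have : 0 < ‖p - q‖ := norm_pos_iff.mpr hpq'
      positivity
    have hmc : ∀ c, A ⊆ Metric.closedBall c r → ‖m - c‖ ^ 2 ≤ r ^ 2 - δ := by
      intro c hc
      have hp' : ‖p - c‖ ≤ r := by
        have := hc hp; rwa [Metric.mem_closedBall, dist_eq_norm] at this
      have hq' : ‖q - c‖ ≤ r := by
        have := hc hq; rwa [Metric.mem_closedBall, dist_eq_norm] at this
      have hpar := parallelogram_law_with_norm ℝ (p - c) (q - c)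
      have e1 : (p - c) + (q - c) = (2:ℝ) • (m - c) := by
        rw [hm, midpoint_eq_smul_add]
        match_scalars <;> norm_num
      have e2 : (p - c) - (q - c) = p - q := by abel
      rw [e1, e2, norm_smul, Real.norm_eq_abs] at hpar
      have habs : |(2:ℝ)| = 2 := by norm_num
      rw [habs] at hpar
      have h1 : (0:ℝ) ≤ ‖p - c‖ := norm_nonneg _
      have h2 : (0:ℝ) ≤ ‖q - c‖ := norm_nonneg _
      rw [hδdef]
      nlinarith [norm_nonneg (m - c), norm_nonneg (p - q)]
    set ρ : ℝ := r - Real.sqrt (r ^ 2 - δ) with hρdef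
    have hρ : 0 < ρ := by
      rw [hρdef, sub_pos]
      exact (Real.sqrt_lt' hr).mpr (by linarith)
    have hball_m : Metric.ball m ρ ⊆ A := by
      intro x hx
      rw [hCA]
      refine Set.mem_iInter₂.mpr fun c hc => ?_
      have h1 : ‖m - c‖ ≤ Real.sqrt (r ^ 2 - δ) := by
        rw [Real.le_sqrt (norm_nonneg _) (by nlinarith [hmc c (hball c hc), sq_nonneg ‖m - c‖])]
        exact hmc c (hball c hc)
      rw [Metric.mem_ball] at hx
      rw [Metric.mem_closedBall]
      calc dist x c ≤ dist x m + dist m c := dist_triangle x m c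
        _ = dist x m + ‖m - c‖ := by simp [dist_eq_norm]
        _ ≤ dist x m + Real.sqrt (r ^ 2 - δ) := by linarith
        _ ≤ ρ + Real.sqrt (r ^ 2 - δ) := by linarith [hx.le]
        _ = r := by rw [hρdef]; ring
    constructor
    · -- epi-Lipschitz
      intro a ha
      have haA : a ∈ A := by
        have := frontier_subset_closure ha
        rwa [hcl.closure_eq] at this
      refine ⟨m - a, min (ρ / 2) 1, lt_min (by positivity) one_pos, ?_⟩
      intro a' ha' hnear t ht htl w hw
      have hεle1 : min (ρ / 2) 1 ≤ 1 := min_le_right _ _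
      have hεleρ : min (ρ / 2) 1 ≤ ρ / 2 := min_le_left _ _
      have haw : a' + w ∈ A := by
        apply hball_m
        rw [Metric.mem_ball, dist_eq_norm]
        have e : a' + w - m = (a' - a) + (w - (m - a)) := by abel
        rw [e]
        calc ‖(a' - a) + (w - (m - a))‖ ≤ ‖a' - a‖ + ‖w - (m - a)‖ := norm_add_le _ _
          _ < min (ρ / 2) 1 + min (ρ / 2) 1 := by linarith
          _ ≤ ρ := by linarith
      have hmem := hAconv ha' haw (a := 1 - t) (b := t) (by linarith) ht (by ring)
      have e : (1 - t) • a' + t • (a' + w) = a' + t • w := by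
        match_scalars <;> ring
      rwa [e] at hmem
    · -- spherically supported
      set C' : Set (EuclideanSpace ℝ (Fin n)) := {c | A ⊆ Metric.closedBall c r} with hC'def
      have hC'eq : C' = ⋂ x ∈ A, Metric.closedBall x r := by
        ext c
        simp only [hC'def, Set.mem_setOf_eq, Set.subset_def, Metric.mem_closedBall,
          Set.mem_iInter]
        constructor
        · intro h x hx; rw [dist_comm]; exact h x hx
        · intro h x hx; rw [dist_comm]; exact h x hx
      have hC'closed : IsClosed C' := by
        rw [hC'eq]; exact isClosed_biInter fun x _ => Metric.isClosed_closedBall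
      have hC'bdd : Bornology.IsBounded C' := by
        apply (Metric.isBounded_closedBall (x := p) (r := r)).subset
        intro c hc
        rw [Metric.mem_closedBall, dist_comm]
        exact hc hp
      have hC'cpt : IsCompact C' := Metric.isCompact_iff_isClosed_bounded.mpr ⟨hC'closed, hC'bdd⟩
      have hC'ne : C'.Nonempty := ⟨c₀, hball c₀ hc₀⟩
      have hCsub : C ⊆ C' := fun c hc => hball c hc
      have hACA' : A = ⋂ c ∈ C', Metric.closedBall c r := by
        apply Set.Subset.antisymm
        · exact Set.subset_iInter₂ fun c hc => hc
        · rw [hCA]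
          exact Set.biInter_subset_biInter_left hCsub
      intro a ha
      have haA : a ∈ A := by
        have := frontier_subset_closure ha
        rwa [hcl.closure_eq] at this
      obtain ⟨c₁, hc₁, hmax⟩ := hC'cpt.exists_isMaxOn hC'ne
        ((continuous_const.dist continuous_id).continuousOn :
          ContinuousOn (fun c => dist a c) C')
      have hd1 : dist a c₁ ≤ r := by
        have := hc₁ haA
        rwa [Metric.mem_closedBall] at this
      have hder : dist a c₁ = r := by
        by_contra hne'
        have hlt : dist a c₁ < r := lt_of_le_of_ne hd1 hne'
        have hsub : Metric.ball a (r - dist a c₁) ⊆ A := by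
          intro y hy
          rw [hACA']
          refine Set.mem_iInter₂.mpr fun c hc => ?_
          rw [Metric.mem_ball] at hy
          rw [Metric.mem_closedBall]
          have hmc' : dist a c ≤ dist a c₁ := hmax hc
          calc dist y c ≤ dist y a + dist a c := dist_triangle y a c
            _ ≤ dist y a + dist a c₁ := by linarith
            _ ≤ r := by linarith
        have : a ∈ interior A :=
          interior_maximal hsub Metric.isOpen_ball (Metric.mem_ball_self (by linarith))
        rw [hcl.frontier_eq] at ha
        exact ha.2 this
      have hnorm : ‖a - c₁‖ = r := by rw [← dist_eq_norm]; exact hder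
      have hkey : ∀ x ∈ A, ⟪a - c₁, x - a⟫ ≤ -(1 / 2) * ‖x - a‖ ^ 2 := by
        intro x hx
        have hxc : ‖x - c₁‖ ≤ r := by
          have := hc₁ hx
          rwa [Metric.mem_closedBall, dist_eq_norm] at this
        have hexp : ‖x - c₁‖ ^ 2 = ‖x - a‖ ^ 2 + 2 * ⟪x - a, a - c₁⟫ + ‖a - c₁‖ ^ 2 := by
          have e : x - c₁ = (x - a) + (a - c₁) := by abel
          rw [e, norm_add_sq_real]
        rw [real_inner_comm]
        nlinarith [norm_nonneg (x - c₁), norm_nonneg (x - a), sq_nonneg ‖x - c₁‖]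
      have hζne : a - c₁ ≠ 0 := by
        intro h
        rw [h, norm_zero] at hnorm
        exact hr.ne hnorm
      refine ⟨a - c₁, ⟨0, le_refl 0, fun x hx => ?_⟩, hζne, fun x hx => ?_⟩
      · have := hkey x hx
        nlinarith [sq_nonneg ‖x - a‖]
      · rw [real_inner_smul_left, hnorm]
        have h3 := mul_le_mul_of_nonneg_left (hkey x hx) (inv_nonneg.mpr hr.le)
        calc r⁻¹ * ⟪a - c₁, x - a⟫ ≤ r⁻¹ * (-(1 / 2) * ‖x - a‖ ^ 2) := h3
          _ = -(1 / (2 * r)) * ‖x - a‖ ^ 2 := by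
            rw [mul_comm 2 r, ← div_div]
            ring
  · -- epi-Lipschitz ∧ spherically supported → strongly convex
    rintro ⟨hEL, hSS⟩
    have hfr : (frontier A).Nonempty := nonempty_frontier_iff.mpr ⟨hne, hproper⟩
    have hch : ∀ a ∈ frontier A, ∃ c : EuclideanSpace ℝ (Fin n),
        ‖a - c‖ = r ∧ A ⊆ Metric.closedBall c r := by
      intro a ha
      obtain ⟨ζ, _, hζne, hζsup⟩ := hSS a ha
      have hu : ‖‖ζ‖⁻¹ • ζ‖ = 1 := norm_smul_inv_norm hζne
      refine ⟨a - r • (‖ζ‖⁻¹ • ζ), ?_, aux_support_ball_s1 hr hu hζsup⟩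
      rw [sub_sub_cancel, norm_smul, Real.norm_eq_abs, abs_of_pos hr, hu, mul_one]
    choose! c hcr hcball using hch
    set B : Set (EuclideanSpace ℝ (Fin n)) :=
      ⋂ a ∈ frontier A, Metric.closedBall (c a) r with hBdef
    have hAB : A ⊆ B := Set.subset_iInter₂ fun a ha => hcball a ha
    have hBconv : Convex ℝ B := convex_iInter₂ fun a _ => convex_closedBall _ r
    have hfrB : ∀ a ∈ frontier A, a ∉ interior B := by
      intro a ha hint
      have h1 : interior B ⊆ interior (Metric.closedBall (c a) r) := by
        apply interior_mono
        exact Set.biInter_subset_of_mem ha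
      rw [interior_closedBall _ hr.ne'] at h1
      have := h1 hint
      rw [Metric.mem_ball, dist_eq_norm, hcr a ha] at this
      exact lt_irrefl r this
    -- interior of A is nonempty
    obtain ⟨a₀, ha₀⟩ := hfr
    obtain ⟨v, ε, hε, hv⟩ := hEL a₀ ha₀
    have ha₀A : a₀ ∈ A := by
      have := frontier_subset_closure ha₀
      rwa [hcl.closure_eq] at this
    have hballint : Metric.ball (a₀ + (ε / 2) • v) (ε ^ 2 / 2) ⊆ A := by
      intro x hx
      set w : EuclideanSpace ℝ (Fin n) := v + (2 / ε) • (x - (a₀ + (ε / 2) • v)) with hwdef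
      have hεne : ε ≠ 0 := hε.ne'
      have hkeyx : a₀ + (ε / 2) • w = x := by
        rw [hwdef]
        match_scalars <;> field_simp <;> ring
      have hwv : ‖w - v‖ < ε := by
        rw [hwdef, add_sub_cancel_left, norm_smul, Real.norm_eq_abs,
          abs_of_pos (by positivity : (0:ℝ) < 2 / ε)]
        have hx' : ‖x - (a₀ + (ε / 2) • v)‖ < ε ^ 2 / 2 := by
          rw [← dist_eq_norm]; exact hx
        calc (2 / ε) * ‖x - (a₀ + (ε / 2) • v)‖ < (2 / ε) * (ε ^ 2 / 2) := by
              exact mul_lt_mul_of_pos_left hx' (by positivity)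
          _ = ε := by field_simp
      have := hv a₀ ha₀A (by simpa using hε) (ε / 2) (by positivity) (by linarith) w hwv
      rwa [hkeyx] at this
    have hintA : (interior A).Nonempty :=
      ⟨a₀ + (ε / 2) • v, (interior_maximal hballint Metric.isOpen_ball)
        (Metric.mem_ball_self (by positivity))⟩
    have hclosA : closure A = A := hcl.closure_eq
    have key1 : ∀ x ∈ interior B, x ∈ closure (interior A) → x ∈ interior A := by
      intro x hxB hxcl
      have hxA : x ∈ A := by
        have : x ∈ closure A := closure_mono interior_subset hxcl
        rwa [hclosA] at this
      by_contra hxint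
      have hxfr : x ∈ frontier A := by
        rw [hcl.frontier_eq]
        exact ⟨hxA, hxint⟩
      exact hfrB x hxfr hxB
    have hIBIA : interior B ⊆ interior A := by
      have hpre : IsPreconnected (interior B) := hBconv.interior.isPreconnected
      by_cases hVne : (interior B ∩ (closure (interior A))ᶜ).Nonempty
      · obtain ⟨z, hz⟩ := hpre (interior A) (closure (interior A))ᶜ isOpen_interior
          isClosed_closure.isOpen_compl
          (fun x hx => by
            by_cases hx' : x ∈ closure (interior A)
            · exact Or.inl (key1 x hx hx')
            · exact Or.inr hx')
          (by
            obtain ⟨z, hz⟩ := hintA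
            exact ⟨z, interior_mono hAB hz, hz⟩)
          hVne
        exact absurd (subset_closure hz.2.1) hz.2.2
      · intro x hx
        by_cases hx' : x ∈ closure (interior A)
        · exact key1 x hx hx'
        · exact absurd ⟨x, hx, hx'⟩ hVne
    have hBA : B ⊆ A := by
      intro y hy
      obtain ⟨z, hz⟩ := hintA
      have hzB : z ∈ interior B := interior_mono hAB hz
      have h1 : y ∈ closure (interior B) := aux_mem_closure_interior hBconv hzB hy
      have h2 : y ∈ closure (interior A) := closure_mono hIBIA h1
      have h3 : y ∈ closure A := closure_mono interior_subset h2
      rwa [hclosA] at h3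
    refine ⟨c '' frontier A, ⟨c a₀, Set.mem_image_of_mem c ha₀⟩, ?_⟩
    rw [Set.biInter_image]
    exact Set.Subset.antisymm hAB hBA
end

section
/- Let A ⊆ ℝⁿ be a nonempty closed proper subset of ℝⁿ, and let r > 0. Then A is r-strongly convex if and only if A is convex and r-spherically supported. -/
/-!
A set is `r`-strongly convex iff it is the intersection of all closed `r`-balls containing it.
If it is, and `a` is a frontier point, a center of an enclosing ball that is farthest from `a`
(these centers form a compact set) is at distance exactly `r` from `a`: otherwise a small ball
around `a` would lie in every enclosing ball, hence in `A`. That ball spherically supports `A`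
at `a`. Conversely, let `z ∉ A` and let `p` be its metric projection onto the convex set `A`;
then `p` is a frontier point with a supporting ball of radius `r`. Reflecting its center in the
hyperplane through `p` orthogonal to `z - p` gives another enclosing ball, and it misses `z`.
-/

open scoped RealInnerProductSpace

variable {E : Type*} [NormedAddCommGroup E] [InnerProductSpace ℝ E]

open Metric Filter Topology

def enclosingBallCenters {X : Type*} [PseudoMetricSpace X] (r : ℝ) (A : Set X) : Set X :=
  {c | A ⊆ closedBall c r}

lemma isClosed_enclosingBallCenters {X : Type*} [PseudoMetricSpace X] (r : ℝ) (A : Set X) :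
    IsClosed (enclosingBallCenters r A) := by
  have : enclosingBallCenters r A = ⋂ x ∈ A, closedBall x r := by
    ext c
    simp only [enclosingBallCenters, Set.subset_def, Set.mem_ofPred_eq, Set.mem_iInter₂]
    exact forall₂_congr fun _ _ => mem_closedBall_comm
  rw [this]
  exact isClosed_biInter fun x _ => isClosed_closedBall

lemma enclosingBallCenters_subset_closedBall {X : Type*} [PseudoMetricSpace X] {r : ℝ}
    {A : Set X} {a : X} (ha : a ∈ A) : enclosingBallCenters r A ⊆ closedBall a r :=
  fun _ hc => mem_closedBall_comm.1 (hc ha)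

section StronglyConvex

variable {F : Type*} [NormedAddCommGroup F] {r : ℝ} {A : Set F}

lemma isStronglyConvex_iff :
    IsStronglyConvex r A ↔ (enclosingBallCenters r A).Nonempty ∧
      ⋂ c ∈ enclosingBallCenters r A, closedBall c r ⊆ A := by
  constructor
  · rintro ⟨C, hC, rfl⟩
    have hCsub : C ⊆ enclosingBallCenters r (⋂ c ∈ C, closedBall c r) :=
      fun c hc => Set.biInter_subset_of_mem hc
    exact ⟨hC.mono hCsub, Set.biInter_mono hCsub fun _ _ => le_rfl⟩
  · rintro ⟨hne, hsub⟩
    exact ⟨_, hne, Set.Subset.antisymm (Set.subset_iInter₂ fun _ hc => hc) hsub⟩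

lemma IsStronglyConvex.convex [NormedSpace ℝ F] (h : IsStronglyConvex r A) : Convex ℝ A := by
  obtain ⟨C, -, rfl⟩ := h
  exact convex_iInter₂ fun c _ => convex_closedBall c r

lemma IsStronglyConvex.isClosed (h : IsStronglyConvex r A) : IsClosed A := by
  obtain ⟨C, -, rfl⟩ := h
  exact isClosed_biInter fun _ _ => isClosed_closedBall

lemma IsStronglyConvex.exists_enclosingBallCenter_dist_eq [ProperSpace F]
    (h : IsStronglyConvex r A) {a : F} (ha : a ∈ frontier A) :
    ∃ c ∈ enclosingBallCenters r A, dist a c = r := by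
  obtain ⟨hne, hsub⟩ := isStronglyConvex_iff.1 h
  have haA : a ∈ A := h.isClosed.frontier_subset ha
  have hcpt : IsCompact (enclosingBallCenters r A) :=
    (isCompact_closedBall a r).of_isClosed_subset (isClosed_enclosingBallCenters r A)
      (enclosingBallCenters_subset_closedBall haA)
  obtain ⟨c, hc, hmax⟩ := hcpt.exists_isMaxOn hne (f := dist a) (by fun_prop)
  refine ⟨c, hc, (mem_closedBall.1 (hc haA)).antisymm (not_lt.1 fun hlt => ha.2 ?_)⟩
  refine mem_interior_iff_mem_nhds.2 (mem_of_superset (ball_mem_nhds a (sub_pos.2 hlt)) ?_)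
  intro x hx
  refine hsub (Set.mem_iInter₂.2 fun c' hc' => (dist_triangle x a c').trans ?_)
  have h1 : dist x a < r - dist a c := mem_ball.1 hx
  have h2 : dist a c' ≤ dist a c := hmax hc'
  linarith

end StronglyConvex

lemma mem_closedBall_sub_smul_iff {r : ℝ} (hr : 0 < r) {a ν : E} (hν : ‖ν‖ = 1) (x : E) :
    x ∈ closedBall (a - r • ν) r ↔ ⟪ν, x - a⟫ ≤ -(1 / (2 * r)) * ‖x - a‖ ^ 2 := by
  rw [mem_closedBall, dist_eq_norm, ← sq_le_sq₀ (norm_nonneg _) hr.le,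
    show x - (a - r • ν) = (x - a) + r • ν by abel, norm_add_sq_real, real_inner_smul_right,
    norm_smul, hν, Real.norm_of_nonneg hr.le, real_inner_comm,
    show -(1 / (2 * r)) * ‖x - a‖ ^ 2 = -‖x - a‖ ^ 2 / (2 * r) by ring,
    le_div_iff₀ (by positivity)]
  constructor <;> intro h <;> linarith

lemma isSphericallySupported_iff {r : ℝ} (hr : 0 < r) {A : Set E} :
    IsSphericallySupported r A ↔
      ∀ a ∈ frontier A, ∃ c ∈ enclosingBallCenters r A, dist a c = r := by
  refine forall₂_congr fun a _ => ⟨?_, ?_⟩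
  · rintro ⟨ζ, -, hζ, hsupp⟩
    have hν : ‖‖ζ‖⁻¹ • ζ‖ = 1 := norm_smul_inv_norm hζ
    refine ⟨a - r • (‖ζ‖⁻¹ • ζ), fun x hx => ?_, ?_⟩
    · exact (mem_closedBall_sub_smul_iff hr hν x).2 (hsupp x hx)
    · rw [dist_eq_norm, sub_sub_cancel, norm_smul, hν, Real.norm_of_nonneg hr.le, mul_one]
  · rintro ⟨c, hc, hac⟩
    set ν := r⁻¹ • (a - c)
    have hν : ‖ν‖ = 1 := by
      rw [norm_smul, ← dist_eq_norm, hac, norm_inv, Real.norm_of_nonneg hr.le,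
        inv_mul_cancel₀ hr.ne']
    have hcν : c = a - r • ν := by
      rw [smul_inv_smul₀ hr.ne', sub_sub_cancel]
    have hsupp : ∀ x ∈ A, ⟪ν, x - a⟫ ≤ -(1 / (2 * r)) * ‖x - a‖ ^ 2 := fun x hx =>
      (mem_closedBall_sub_smul_iff hr hν x).1 (hcν ▸ hc hx)
    refine ⟨ν, ⟨0, le_rfl, fun x hx => ?_⟩, norm_ne_zero_iff.1 (hν ▸ one_ne_zero), ?_⟩
    · have : 0 ≤ 1 / (2 * r) * ‖x - a‖ ^ 2 := by positivity
      linarith [hsupp x hx]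
    · rwa [hν, inv_one, one_smul]

lemma mem_frontier_of_inner_sub_nonpos {A : Set E} {p z : E} (hp : p ∈ A) (hz : z ≠ p)
    (h : ∀ y ∈ A, ⟪z - p, y - p⟫ ≤ 0) : p ∈ frontier A := by
  refine ⟨subset_closure hp, fun hint => ?_⟩
  have hseg : Tendsto (fun t : ℝ => p + t • (z - p)) (𝓝[>] 0) (𝓝 p) :=
    tendsto_nhdsWithin_of_tendsto_nhds <|
      (by fun_prop : Continuous fun t : ℝ => p + t • (z - p)).tendsto' 0 p (by simp)
  obtain ⟨t, htA, ht⟩ :=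
    ((hseg.eventually (mem_interior_iff_mem_nhds.1 hint)).and self_mem_nhdsWithin).exists
  have hinner := h _ htA
  rw [add_sub_cancel_left, real_inner_smul_right, real_inner_self_eq_norm_sq] at hinner
  exact (mul_pos ht (pow_pos (norm_pos_iff.2 (sub_ne_zero.2 hz)) 2)).not_ge hinner

lemma exists_enclosingBallCenter_lt_dist {r : ℝ} {A : Set E} {c₀ p z : E}
    (hc₀ : c₀ ∈ enclosingBallCenters r A) (hp : dist p c₀ = r) (hz : z ≠ p)
    (h : ∀ y ∈ A, ⟪z - p, y - p⟫ ≤ 0) : ∃ c ∈ enclosingBallCenters r A, r < dist z c := by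
  set w := z - p
  set v := c₀ - p
  have hv : ‖v‖ = r := by rw [← hp, dist_comm, dist_eq_norm]
  have hr : 0 ≤ r := hp ▸ dist_nonneg
  have hw : 0 < ‖w‖ := norm_pos_iff.2 (sub_ne_zero.2 hz)
  by_cases hvw : ⟪v, w⟫ ≤ 0
  · refine ⟨c₀, hc₀, lt_of_pow_lt_pow_left₀ 2 dist_nonneg ?_⟩
    rw [dist_eq_norm, ← sub_sub_sub_cancel_right z c₀ p, norm_sub_sq_real, hv, real_inner_comm]
    nlinarith
  -- `c₀ - T • w` is `c₀` with `c₀ - p` reflected in the hyperplane orthogonal to `w`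
  set T := 2 * ⟪v, w⟫ / ‖w‖ ^ 2
  have hT : 0 < T := div_pos (by linarith) (by positivity)
  have hTw : T * ‖w‖ ^ 2 = 2 * ⟪v, w⟫ := div_mul_cancel₀ _ (by positivity)
  refine ⟨c₀ - T • w, fun y hy => ?_, lt_of_pow_lt_pow_left₀ 2 dist_nonneg ?_⟩
  · have hyc₀ : ‖y - c₀‖ ^ 2 ≤ r ^ 2 :=
      pow_le_pow_left₀ (norm_nonneg _) (mem_closedBall_iff_norm.1 (hc₀ hy)) 2
    have hyw : ⟪y - c₀, w⟫ ≤ -⟪v, w⟫ := by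
      rw [← sub_sub_sub_cancel_right y c₀ p, inner_sub_left]
      linarith [h y hy, real_inner_comm w (y - p)]
    rw [mem_closedBall, dist_eq_norm, ← sq_le_sq₀ (norm_nonneg _) hr,
      show y - (c₀ - T • w) = (y - c₀) + T • w by abel, norm_add_sq_real, real_inner_smul_right,
      norm_smul, Real.norm_of_nonneg hT.le]
    nlinarith [mul_le_mul_of_nonneg_left hyw hT.le]
  · rw [dist_eq_norm, show z - (c₀ - T • w) = (1 + T) • w - v by simp only [w, v]; module,
      norm_sub_sq_real, norm_smul, real_inner_smul_left, hv, real_inner_comm,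
      Real.norm_of_nonneg (by positivity : (0 : ℝ) ≤ 1 + T)]
    nlinarith

lemma isStronglyConvex_of_forall_mem_frontier [CompleteSpace E] {r : ℝ} {A : Set E}
    (hne : A.Nonempty) (hcl : IsClosed A) (hproper : A ≠ Set.univ) (hconv : Convex ℝ A)
    (h : ∀ a ∈ frontier A, ∃ c ∈ enclosingBallCenters r A, dist a c = r) :
    IsStronglyConvex r A := by
  refine isStronglyConvex_iff.2 ⟨?_, fun z hz => ?_⟩
  · obtain ⟨a, ha⟩ := nonempty_frontier_iff.2 ⟨hne, hproper⟩
    obtain ⟨c, hc, -⟩ := h a ha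
    exact ⟨c, hc⟩
  by_contra hzA
  obtain ⟨p, hpA, hpmin⟩ := exists_norm_eq_iInf_of_complete_convex hne hcl.isComplete hconv z
  have hproj := (norm_eq_iInf_iff_real_inner_le_zero hconv hpA).1 hpmin
  have hzp : z ≠ p := fun hzp => hzA (hzp ▸ hpA)
  obtain ⟨c₀, hc₀, hpc₀⟩ := h p (mem_frontier_of_inner_sub_nonpos hpA hzp hproj)
  obtain ⟨c, hc, hlt⟩ := exists_enclosingBallCenter_lt_dist hc₀ hpc₀ hzp hproj
  exact hlt.not_ge (Set.mem_iInter₂.1 hz c hc)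

theorem statement_2 {n : ℕ} (A : Set (EuclideanSpace ℝ (Fin n)))
    (hne : A.Nonempty) (hcl : IsClosed A) (hproper : A ≠ Set.univ)
    (r : ℝ) (hr : 0 < r) :
    IsStronglyConvex r A ↔ Convex ℝ A ∧ IsSphericallySupported r A := by
  rw [isSphericallySupported_iff hr]
  exact ⟨fun h => ⟨h.convex, fun _ ha => h.exists_enclosingBallCenter_dist_eq ha⟩,
    fun ⟨hconv, h⟩ => isStronglyConvex_of_forall_mem_frontier hne hcl hproper hconv h⟩
end

section
/- Let A ⊆ ℝⁿ be a nonempty closed set and let r > 0. Then A is r-strongly convex if and only if A is convex, bounded, and r-negatively E_r(A)-convex, where E_r(A) := {x ∈ ℝⁿ : there exists a ∈ A with ‖x − a‖ > r}. -/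
open scoped RealInnerProductSpace

variable {E : Type*} [NormedAddCommGroup E] [InnerProductSpace ℝ E]

set_option maxHeartbeats 1000000 in
lemma aux_le_zero {K M : ℝ} (hM : 0 ≤ M) (h : ∀ l : ℝ, 0 < l → l ≤ 1 → K ≤ l * M) : K ≤ 0 := by
  by_contra hK
  push_neg at hK
  have hl1 : (0:ℝ) < K / (2 * (M + 1)) := by positivity
  rcases le_or_gt (K / (2 * (M + 1))) 1 with h1 | h1
  · have := h _ hl1 h1
    have h2 : K / (2 * (M + 1)) * M < K := by
      rw [div_mul_eq_mul_div, div_lt_iff₀ (by positivity)]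
      nlinarith
    linarith
  · have := h 1 one_pos le_rfl
    have : K ≤ M := by linarith
    have : K / (2 * (M+1)) ≤ 1 := by
      rw [div_le_one (by positivity)]; linarith
    linarith

lemma prox_lin_support {A : Set E} (hconv : Convex ℝ A) {a : E} (ha : a ∈ A)
    {ζ : E} (hζ : ζ ∈ proxNormalCone A a) : ∀ b ∈ A, ⟪ζ, b - a⟫ ≤ 0 := by
  intro b hb
  obtain ⟨σ, hσ, hP⟩ := hζ
  refine aux_le_zero (M := σ * ‖b - a‖ ^ 2) (by positivity) ?_
  intro l hl hl1
  have hx : a + l • (b - a) ∈ A := by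
    have := hconv ha hb (by linarith : (0:ℝ) ≤ 1 - l) hl.le (by ring)
    convert this using 1
    module
  have h2 := hP _ hx
  rw [add_sub_cancel_left, real_inner_smul_right, norm_smul] at h2
  have h3 : l * ⟪ζ, b - a⟫ ≤ l * (l * (σ * ‖b - a‖ ^ 2)) := by
    calc l * ⟪ζ, b - a⟫ ≤ σ * (‖l‖ * ‖b - a‖) ^ 2 := h2
    _ = l * (l * (σ * ‖b - a‖ ^ 2)) := by
        rw [Real.norm_eq_abs, abs_of_pos hl]; ring
  exact le_of_mul_le_mul_left h3 hl |>.trans (by nlinarith [sq_nonneg ‖b-a‖])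

set_option maxHeartbeats 1000000 in
lemma norm_comb_sq (μ δ : ℝ) (v ζ w : E) :
    ‖μ • v + δ • ζ - w‖ ^ 2 = μ^2*‖v‖^2 + 2*(μ*δ)*⟪ζ,v⟫ + δ^2*‖ζ‖^2
      - 2*(μ*⟪v,w⟫ + δ*⟪ζ,w⟫) + ‖w‖^2 := by
  rw [norm_sub_sq_real, norm_add_sq_real, inner_add_left, real_inner_smul_left,
    real_inner_smul_left, real_inner_smul_left, real_inner_smul_right, norm_smul, norm_smul,
    real_inner_comm v ζ, Real.norm_eq_abs, Real.norm_eq_abs]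
  simp [mul_pow, sq_abs]
  ring


set_option maxHeartbeats 1000000 in
lemma supporting_ball {C A : Set E} {r : ℝ} (hr : 0 < r)
    (hA : A = ⋂ c ∈ C, Metric.closedBall c r) {a : E} (ha : a ∈ A)
    {ζ : E} (hζ1 : ‖ζ‖ = 1) (hζ : ζ ∈ proxNormalCone A a) :
    ∀ b ∈ A, ⟪ζ, b - a⟫ ≤ -(1 / (2 * r)) * ‖b - a‖ ^ 2 := by
  have hconv : Convex ℝ A := by
    rw [hA]; exact convex_iInter fun c => convex_iInter fun _ => convex_closedBall c r
  have hlin := prox_lin_support hconv ha hζ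
  intro b hb
  by_contra hcon
  push_neg at hcon
  obtain ⟨β, hβ⟩ : ∃ β : ℝ, ⟪ζ, b - a⟫ = β := ⟨_, rfl⟩
  obtain ⟨L, hL⟩ : ∃ L : ℝ, ‖b - a‖ = L := ⟨_, rfl⟩
  rw [hβ, hL] at hcon
  have hβ0 : β ≤ 0 := hβ ▸ hlin b hb
  have hΔ : 0 < L ^ 2 + 2 * r * β := by
    have h1 : -(1/(2*r)) * L^2 * (2*r) < β * (2*r) :=
      mul_lt_mul_of_pos_right hcon (by positivity)
    have h2 : -(1/(2*r)) * L^2 * (2*r) = -L^2 := by field_simp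
    nlinarith
  obtain ⟨Δ, hΔdef⟩ : ∃ x : ℝ, x = L ^ 2 + 2 * r * β := ⟨_, rfl⟩
  rw [← hΔdef] at hΔ
  obtain ⟨η, hη⟩ : ∃ x : ℝ, x = Δ / (4 * r) := ⟨_, rfl⟩
  have hηpos : 0 < η := by rw [hη]; positivity
  have hγ2 : 0 ≤ L ^ 2 - β ^ 2 := by
    have h1 : |β| ≤ ‖ζ‖ * ‖b - a‖ := hβ ▸ abs_real_inner_le_norm ζ (b - a)
    rw [hζ1, one_mul, hL] at h1
    nlinarith [abs_nonneg β, sq_abs β]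
  obtain ⟨γ2, hγ2def⟩ : ∃ x : ℝ, x = L ^ 2 - β ^ 2 := ⟨_, rfl⟩
  rw [← hγ2def] at hγ2
  obtain ⟨μ, hμ⟩ : ∃ x : ℝ, x = Δ / (Δ + 2 * (γ2 + η ^ 2) + 1) := ⟨_, rfl⟩
  have hden : 0 < Δ + 2 * (γ2 + η ^ 2) + 1 := by nlinarith [sq_nonneg η]
  have hμpos : 0 < μ := by rw [hμ]; positivity
  have hμlt1 : μ < 1 := by
    rw [hμ, div_lt_one hden]; nlinarith
  have hμeq : μ * (Δ + 2 * (γ2 + η ^ 2) + 1) = Δ := by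
    rw [hμ]; exact div_mul_cancel₀ _ (ne_of_gt hden)
  obtain ⟨δ, hδ⟩ : ∃ x : ℝ, x = μ * (η - β) := ⟨_, rfl⟩
  have hδpos : 0 < δ := hδ ▸ mul_pos hμpos (by linarith)
  have hkey : μ ^ 2 * L ^ 2 + 2 * μ * δ * β + δ ^ 2 + 2 * δ * r ≤ μ * L ^ 2 := by
    have h1 : η * (4 * r) = Δ := by rw [hη]; exact div_mul_cancel₀ _ (by positivity)
    have h2 : μ * (γ2 + η ^ 2) ≤ Δ / 2 := by
      rw [hμ, div_mul_eq_mul_div, div_le_div_iff₀ hden two_pos]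
      nlinarith
    have h3 : μ * (μ * (γ2 + η ^ 2) + 2 * r * η - 2 * r * β) ≤ μ * L ^ 2 := by
      apply mul_le_mul_of_nonneg_left _ hμpos.le
      nlinarith
    calc μ ^ 2 * L ^ 2 + 2 * μ * δ * β + δ ^ 2 + 2 * δ * r
        = μ * (μ * (γ2 + η ^ 2) + 2 * r * η - 2 * r * β) := by rw [hδ, hγ2def]; ring
      _ ≤ μ * L ^ 2 := h3
  have hzA : a + μ • (b - a) + δ • ζ ∈ A := by
    rw [hA, Set.mem_iInter₂]
    intro c hc
    have haB : ‖a - c‖ ≤ r := by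
      rw [hA, Set.mem_iInter₂] at ha
      have := ha c hc
      rwa [Metric.mem_closedBall, dist_eq_norm] at this
    have hbB : ‖b - c‖ ≤ r := by
      rw [hA, Set.mem_iInter₂] at hb
      have := hb c hc
      rwa [Metric.mem_closedBall, dist_eq_norm] at this
    rw [Metric.mem_closedBall, dist_eq_norm]
    have hzc : a + μ • (b - a) + δ • ζ - c = μ • (b - a) + δ • ζ - (c - a) := by abel
    rw [hzc]
    have hq : ‖c - a‖ ≤ r := by rwa [norm_sub_rev] at haB
    have hq0 : 0 ≤ ‖c - a‖ := norm_nonneg _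
    have hvw : (L ^ 2 + ‖c - a‖ ^ 2 - r ^ 2) / 2 ≤ ⟪b - a, c - a⟫ := by
      have hbc : ‖(b - a) - (c - a)‖ ≤ r := by
        have : b - a - (c - a) = b - c := by abel
        rw [this]; exact hbB
      have hsq : ‖(b - a) - (c - a)‖ ^ 2 ≤ r ^ 2 := by
        nlinarith [norm_nonneg ((b - a) - (c - a))]
      rw [norm_sub_sq_real, hL] at hsq
      linarith
    have hζw : -‖c - a‖ ≤ ⟪ζ, c - a⟫ := by
      have h := abs_real_inner_le_norm ζ (c - a)
      rw [hζ1, one_mul] at h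
      linarith [(abs_le.mp h).1]
    obtain ⟨q, hqdef⟩ : ∃ x : ℝ, ‖c - a‖ = x := ⟨_, rfl⟩
    obtain ⟨I1, hI1⟩ : ∃ x : ℝ, ⟪b - a, c - a⟫ = x := ⟨_, rfl⟩
    obtain ⟨I2, hI2⟩ : ∃ x : ℝ, ⟪ζ, c - a⟫ = x := ⟨_, rfl⟩
    obtain ⟨N, hN⟩ : ∃ x : ℝ, ‖μ • (b - a) + δ • ζ - (c - a)‖ = x := ⟨_, rfl⟩
    have hN0 : 0 ≤ N := hN ▸ norm_nonneg _
    have hexp := norm_comb_sq μ δ (b - a) ζ (c - a)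
    rw [hL, hζ1, hβ, hqdef, hI1, hI2, hN] at hexp
    rw [hqdef] at hq hq0
    rw [hqdef, hI1] at hvw
    rw [hqdef, hI2] at hζw
    rw [hN]
    have e1 : μ * ((L ^ 2 + q ^ 2 - r ^ 2) / 2) ≤ μ * I1 :=
      mul_le_mul_of_nonneg_left hvw hμpos.le
    have e2 : δ * (-q) ≤ δ * I2 := mul_le_mul_of_nonneg_left hζw hδpos.le
    have e3 : δ * q ≤ δ * r := mul_le_mul_of_nonneg_left hq hδpos.le
    have e4 : 0 ≤ (1 - μ) * (r * r - q * q) :=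
      mul_nonneg (by linarith) (sub_nonneg.mpr (mul_self_le_mul_self hq0 hq))
    have hfin : N ^ 2 ≤ r ^ 2 := by nlinarith
    nlinarith
  have hfinal := hlin _ hzA
  have hza : a + μ • (b - a) + δ • ζ - a = μ • (b - a) + δ • ζ := by abel
  rw [hza, inner_add_right, real_inner_smul_right, real_inner_smul_right,
    real_inner_self_eq_norm_sq, hζ1, hβ] at hfinal
  nlinarith [mul_pos hμpos hηpos]


set_option maxHeartbeats 1000000 in
theorem statement_3 {n : ℕ} (A : Set (EuclideanSpace ℝ (Fin n)))
    (hne : A.Nonempty) (hcl : IsClosed A) (r : ℝ) (hr : 0 < r) :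
    IsStronglyConvex r A ↔
      Convex ℝ A ∧ Bornology.IsBounded A ∧ IsNegSConvex r (farExceeds r A) A := by
  constructor
  · rintro ⟨C, hC, hA⟩
    refine ⟨?_, ?_, ?_⟩
    · rw [hA]; exact convex_iInter fun c => convex_iInter fun _ => convex_closedBall c r
    · obtain ⟨c, hc⟩ := hC
      have : A ⊆ Metric.closedBall c r := by
        rw [hA]; exact Set.iInter₂_subset c hc
      exact (Metric.isBounded_closedBall).subset this
    · rintro ⟨a, ha, a', ha', hne, ζ, hζ, hζ1, ζ', hζ', hζ1', t, ht, t', ht', heq, -⟩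
      have haA : a ∈ A := hcl.frontier_subset ha
      have ha'A : a' ∈ A := hcl.frontier_subset ha'
      have key := supporting_ball hr hA haA hζ1 hζ a' ha'A
      have key' := supporting_ball hr hA ha'A hζ1' hζ' a haA
      have heq1 : a' - a + t • ζ = t' • ζ' := by
        have : a' - t' • ζ' = a - t • ζ := heq.symm
        rw [sub_eq_iff_eq_add] at this
        rw [this]; abel
      have heq2 : a - a' + t' • ζ' = t • ζ := by
        rw [sub_eq_iff_eq_add] at heq
        rw [heq]; abel
      have h1 : ‖a' - a + t • ζ‖ = t' := by
        rw [heq1, norm_smul, hζ1', Real.norm_eq_abs, abs_of_pos (lt_trans hr ht'), mul_one]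
      have h2 : ‖a - a' + t' • ζ'‖ = t := by
        rw [heq2, norm_smul, hζ1, Real.norm_eq_abs, abs_of_pos (lt_trans hr ht), mul_one]
      have e1 : t' ^ 2 = ‖a' - a‖ ^ 2 + 2 * (t * ⟪ζ, a' - a⟫) + t ^ 2 := by
        rw [← h1, norm_add_sq_real, norm_smul, hζ1, Real.norm_eq_abs,
          abs_of_pos (lt_trans hr ht), real_inner_smul_right, real_inner_comm]
        ring
      have e2 : t ^ 2 = ‖a - a'‖ ^ 2 + 2 * (t' * ⟪ζ', a - a'⟫) + t' ^ 2 := by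
        rw [← h2, norm_add_sq_real, norm_smul, hζ1', Real.norm_eq_abs,
          abs_of_pos (lt_trans hr ht'), real_inner_smul_right, real_inner_comm]
        ring
      have hk1 := key
      have hnrm : ‖a - a'‖ = ‖a' - a‖ := norm_sub_rev a a'
      have hz : ‖a' - a‖ ^ 2 ≤ 0 := by
        have c1 : ⟪ζ, a' - a⟫ ≤ -(1 / (2 * r)) * ‖a' - a‖ ^ 2 := key
        have c2 : ⟪ζ', a - a'⟫ ≤ -(1 / (2 * r)) * ‖a - a'‖ ^ 2 := key'
        rw [hnrm] at c2 e2
        have hrpos : 0 < 2 * r := by linarith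
        have m1 : t * ⟪ζ, a' - a⟫ ≤ t * (-(1 / (2 * r)) * ‖a' - a‖ ^ 2) :=
          mul_le_mul_of_nonneg_left c1 (by linarith)
        have m2 : t' * ⟪ζ', a - a'⟫ ≤ t' * (-(1 / (2 * r)) * ‖a' - a‖ ^ 2) :=
          mul_le_mul_of_nonneg_left c2 (by linarith)
        have hinv : (1 / (2 * r)) * (2 * r) = 1 := by field_simp
        have hcpos : (0:ℝ) < 1 / (2 * r) := by positivity
        nlinarith [sq_nonneg ‖a' - a‖, mul_pos hcpos (show (0:ℝ) < t + t' - 2*r by linarith)]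
      have : a' - a = 0 := by
        have := norm_nonneg (a' - a)
        have h0 : ‖a' - a‖ = 0 := by nlinarith
        exact norm_eq_zero.mp h0
      exact hne (by rw [sub_eq_zero] at this; exact this.symm)
  · rintro ⟨hconv, hbdd, hneg⟩
    have hcomp : IsCompact A := Metric.isCompact_of_isClosed_isBounded hcl hbdd
    have key : ∀ x, x ∉ A → ∃ c, (∀ b ∈ A, dist b c ≤ r) ∧ r < dist x c := by
      intro x hx
      obtain ⟨p, hpA, hpmin'⟩ := hcomp.exists_isMinOn hne
        ((continuous_const.dist continuous_id).continuousOn)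
      have hpmin : ∀ b ∈ A, dist x p ≤ dist x b := fun b hb => hpmin' hb
      obtain ⟨d, hddef⟩ : ∃ y : ℝ, dist x p = y := ⟨_, rfl⟩
      have hd : 0 < d := by
        rw [← hddef]
        rcases eq_or_ne x p with h | h
        · exact absurd (h ▸ hpA) hx
        · exact dist_pos.mpr h
      have hxp : ‖x - p‖ = d := by rw [← dist_eq_norm, hddef]
      obtain ⟨ζ, hζdef⟩ : ∃ z : EuclideanSpace ℝ (Fin n), z = d⁻¹ • (x - p) := ⟨_, rfl⟩
      have hζ1 : ‖ζ‖ = 1 := by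
        rw [hζdef, norm_smul, hxp, Real.norm_eq_abs, abs_of_pos (inv_pos.mpr hd),
          inv_mul_cancel₀ hd.ne']
      have hdζ : d • ζ = x - p := by
        rw [hζdef, smul_smul, mul_inv_cancel₀ hd.ne', one_smul]
      have hproj : ∀ b ∈ A, ⟪x - p, b - p⟫ ≤ 0 := by
        intro b hb
        refine aux_le_zero (M := ‖b - p‖ ^ 2 / 2) (by positivity) ?_
        intro l hl hl1
        have hptA : p + l • (b - p) ∈ A := by
          have := hconv hpA hb (by linarith : (0:ℝ) ≤ 1 - l) hl.le (by ring)
          convert this using 1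
          module
        have h1 := hpmin _ hptA
        rw [hddef] at h1
        have h2 : dist x (p + l • (b - p)) ^ 2
            = d ^ 2 - 2 * (l * ⟪x - p, b - p⟫) + l ^ 2 * ‖b - p‖ ^ 2 := by
          rw [dist_eq_norm]
          have he : x - (p + l • (b - p)) = (x - p) - l • (b - p) := by abel
          rw [he, norm_sub_sq_real, real_inner_smul_right, norm_smul, hxp, Real.norm_eq_abs,
            abs_of_pos hl]
          ring
        have h4 : d ^ 2 ≤ dist x (p + l • (b - p)) ^ 2 := by
          nlinarith [dist_nonneg (x := x) (y := p + l • (b - p)), hd]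
        rw [h2] at h4
        nlinarith [hl]
      have hζcone : ζ ∈ proxNormalCone A p := by
        refine ⟨0, le_refl 0, fun b hb => ?_⟩
        rw [zero_mul, hζdef, real_inner_smul_left]
        exact mul_nonpos_of_nonneg_of_nonpos (inv_nonneg.mpr hd.le) (hproj b hb)
      have hpfr : p ∈ frontier A := by
        rw [hcl.frontier_eq]
        refine ⟨hpA, fun hint => ?_⟩
        obtain ⟨ε, hε, hballs⟩ := Metric.mem_nhds_iff.mp (mem_interior_iff_mem_nhds.mp hint)
        have hl0 : 0 < min (ε/2) d := lt_min (by linarith) hd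
        have hmemA : p + (min (ε/2) d) • ζ ∈ A := by
          apply hballs
          rw [Metric.mem_ball, dist_eq_norm]
          have he : p + (min (ε/2) d) • ζ - p = (min (ε/2) d) • ζ := by abel
          rw [he, norm_smul, hζ1, mul_one, Real.norm_eq_abs, abs_of_pos hl0]
          exact lt_of_le_of_lt (min_le_left _ _) (by linarith)
        have h1 := hpmin _ hmemA
        rw [hddef, dist_eq_norm] at h1
        have h2 : x - (p + (min (ε/2) d) • ζ) = (d - min (ε/2) d) • ζ := by
          rw [sub_smul, hdζ]; abel
        rw [h2, norm_smul, hζ1, mul_one, Real.norm_eq_abs] at h1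
        have h3 : |d - min (ε/2) d| < d := by
          rw [abs_lt]
          constructor
          · nlinarith [min_le_right (ε/2) d, hl0]
          · linarith [hl0]
        linarith
      have sub : ∀ s, r < s → ∀ b ∈ A, ‖p - s • ζ - b‖ ≤ s := by
        intro s hs
        by_contra hcon
        push_neg at hcon
        obtain ⟨b₀, hb₀, hgt⟩ := hcon
        obtain ⟨a', ha'A, hmax'⟩ := hcomp.exists_isMaxOn hne
          ((continuous_const.dist continuous_id).continuousOn)
        have hmax : ∀ b ∈ A, dist (p - s • ζ) b ≤ dist (p - s • ζ) a' := fun b hb => hmax' hb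
        obtain ⟨t', ht'def⟩ : ∃ y : ℝ, dist (p - s • ζ) a' = y := ⟨_, rfl⟩
        have hst' : s < t' := by
          rw [← ht'def]
          calc s < ‖p - s • ζ - b₀‖ := hgt
            _ = dist (p - s • ζ) b₀ := (dist_eq_norm _ _).symm
            _ ≤ dist (p - s • ζ) a' := hmax _ hb₀
        have ht'pos : 0 < t' := lt_trans (lt_trans hr hs) hst'
        have ha'z : ‖a' - (p - s • ζ)‖ = t' := by rw [← dist_eq_norm, dist_comm, ht'def]
        obtain ⟨ζ', hζ'def⟩ : ∃ z : EuclideanSpace ℝ (Fin n),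
          z = t'⁻¹ • (a' - (p - s • ζ)) := ⟨_, rfl⟩
        have hζ'1 : ‖ζ'‖ = 1 := by
          rw [hζ'def, norm_smul, ha'z, Real.norm_eq_abs, abs_of_pos (inv_pos.mpr ht'pos),
            inv_mul_cancel₀ ht'pos.ne']
        have ht'ζ' : t' • ζ' = a' - (p - s • ζ) := by
          rw [hζ'def, smul_smul, mul_inv_cancel₀ ht'pos.ne', one_smul]
        have hfar : ∀ b ∈ A, ⟪a' - (p - s • ζ), b - a'⟫ ≤ 0 := by
          intro b hb
          have h2 : ‖b - (p - s • ζ)‖ ≤ t' := by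
            rw [← dist_eq_norm, dist_comm, ← ht'def]
            exact hmax b hb
          have h3 : ‖b - (p - s • ζ)‖ ^ 2
              = ‖b - a'‖ ^ 2 + 2 * ⟪a' - (p - s • ζ), b - a'⟫ + t' ^ 2 := by
            have he : b - (p - s • ζ) = (b - a') + (a' - (p - s • ζ)) := by abel
            rw [he, norm_add_sq_real, ha'z, real_inner_comm]
          nlinarith [sq_nonneg ‖b - a'‖, norm_nonneg (b - (p - s • ζ))]
        have hζ'cone : ζ' ∈ proxNormalCone A a' := by
          refine ⟨0, le_refl 0, fun b hb => ?_⟩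
          rw [zero_mul, hζ'def, real_inner_smul_left]
          exact mul_nonpos_of_nonneg_of_nonpos (inv_nonneg.mpr ht'pos.le) (hfar b hb)
        have ha'fr : a' ∈ frontier A := by
          rw [hcl.frontier_eq]
          refine ⟨ha'A, fun hint => ?_⟩
          obtain ⟨ε, hε, hballs⟩ := Metric.mem_nhds_iff.mp (mem_interior_iff_mem_nhds.mp hint)
          have hmemA : a' + (ε/2) • ζ' ∈ A := by
            apply hballs
            rw [Metric.mem_ball, dist_eq_norm]
            have he : a' + (ε/2) • ζ' - a' = (ε/2) • ζ' := by abel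
            rw [he, norm_smul, hζ'1, mul_one, Real.norm_eq_abs, abs_of_pos (by linarith)]
            linarith
          have h1 := hmax _ hmemA
          rw [ht'def] at h1
          have h2 : dist (p - s • ζ) (a' + (ε/2) • ζ') = t' + ε/2 := by
            rw [dist_eq_norm]
            have he : p - s • ζ - (a' + (ε/2) • ζ') = -((t' + ε/2) • ζ') := by
              rw [add_smul, ht'ζ']; abel
            rw [he, norm_neg, norm_smul, hζ'1, mul_one, Real.norm_eq_abs,
              abs_of_pos (by linarith)]
          rw [h2] at h1
          linarith
        have hpa' : p ≠ a' := by
          intro h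
          have : ‖a' - (p - s • ζ)‖ = s := by
            rw [← h]
            have he : p - (p - s • ζ) = s • ζ := by abel
            rw [he, norm_smul, hζ1, mul_one, Real.norm_eq_abs, abs_of_pos (lt_trans hr hs)]
          rw [ha'z] at this
          linarith
        refine hneg ⟨p, hpfr, a', ha'fr, hpa', ζ, hζcone, hζ1, ζ', hζ'cone, hζ'1,
          s, hs, t', lt_trans hs hst', ?_, ?_⟩
        · rw [ht'ζ']; abel
        · exact ⟨b₀, hb₀, lt_trans hs hgt⟩
      have hballA : ∀ b ∈ A, ‖p - r • ζ - b‖ ≤ r := by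
        intro b hb
        refine le_of_forall_pos_le_add ?_
        intro ε hε
        have h1 := sub (r + ε/2) (by linarith) b hb
        have h2 : p - r • ζ - b = (p - (r + ε/2) • ζ - b) + (ε/2) • ζ := by
          rw [add_smul]; abel
        rw [h2]
        calc ‖(p - (r + ε/2) • ζ - b) + (ε/2) • ζ‖
            ≤ ‖p - (r + ε/2) • ζ - b‖ + ‖(ε/2) • ζ‖ := norm_add_le _ _
          _ ≤ (r + ε/2) + ε/2 := by
              have : ‖(ε/2) • ζ‖ = ε/2 := by
                rw [norm_smul, hζ1, mul_one, Real.norm_eq_abs, abs_of_pos (by linarith)]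
              rw [this]; linarith
          _ = r + ε := by ring
      refine ⟨p - r • ζ, fun b hb => ?_, ?_⟩
      · rw [dist_eq_norm, norm_sub_rev]; exact hballA b hb
      · rw [dist_eq_norm]
        have he : x - (p - r • ζ) = (d + r) • ζ := by
          rw [add_smul, hdζ]; abel
        rw [he, norm_smul, hζ1, mul_one, Real.norm_eq_abs, abs_of_pos (by linarith)]
        linarith
    by_cases hall : ∀ x : EuclideanSpace ℝ (Fin n), x ∈ A
    · obtain ⟨a₀, ha₀⟩ := hne
      by_cases hsub : ∀ y : EuclideanSpace ℝ (Fin n), y = a₀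
      · refine ⟨{a₀}, ⟨a₀, rfl⟩, ?_⟩
        ext y
        simp only [Set.mem_iInter, Set.mem_singleton_iff, Metric.mem_closedBall]
        constructor
        · intro _ c hc
          subst hc
          rw [hsub y, dist_self]
          exact hr.le
        · intro _
          rw [hsub y]; exact ha₀
      · push_neg at hsub
        obtain ⟨y, hy⟩ := hsub
        exfalso
        obtain ⟨R, hR⟩ := hbdd.subset_closedBall a₀
        have hy0 : 0 < ‖y - a₀‖ := by rw [norm_pos_iff, sub_ne_zero]; exact hy
        have hw : dist (a₀ + ((|R| + 1) / ‖y - a₀‖) • (y - a₀)) a₀ = |R| + 1 := by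
          rw [dist_eq_norm]
          have he : a₀ + ((|R| + 1) / ‖y - a₀‖) • (y - a₀) - a₀
              = ((|R| + 1) / ‖y - a₀‖) • (y - a₀) := by abel
          rw [he, norm_smul, Real.norm_eq_abs, abs_of_pos (by positivity), div_mul_cancel₀]
          exact hy0.ne'
        have h1 := hR (hall (a₀ + ((|R| + 1) / ‖y - a₀‖) • (y - a₀)))
        rw [Metric.mem_closedBall, hw] at h1
        linarith [le_abs_self R]
    · push_neg at hall
      obtain ⟨x₀, hx₀⟩ := hall
      obtain ⟨c₀, hc₀, -⟩ := key x₀ hx₀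
      refine ⟨{c | ∀ b ∈ A, dist b c ≤ r}, ⟨c₀, hc₀⟩, ?_⟩
      apply Set.Subset.antisymm
      · intro y hy
        rw [Set.mem_iInter₂]
        intro c hc
        rw [Metric.mem_closedBall]
        exact hc y hy
      · intro y hy
        by_contra hyA
        obtain ⟨c, hcD, hcx⟩ := key y hyA
        rw [Set.mem_iInter₂] at hy
        have h2 := hy c hcD
        rw [Metric.mem_closedBall] at h2
        linarith
end

section
/- Let A ⊆ ℝⁿ be a nonempty compact convex set and let r > 0. If A is r-negatively E_r(A)-convex, where E_r(A) := {x ∈ ℝⁿ : there exists a ∈ A with ‖x − a‖ > r}, then for every x ∈ E_r(A) the set far_A(x) of farthest points of A from x is a singleton. -/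
open scoped RealInnerProductSpace

variable {E : Type*} [NormedAddCommGroup E] [InnerProductSpace ℝ E]

lemma far_inner_nonpos {A : Set E} {x a : E} (hmax : ∀ b ∈ A, ‖x - b‖ ≤ ‖x - a‖)
    {b : E} (hb : b ∈ A) : ⟪a - x, b - a⟫ ≤ 0 := by
  have h := hmax b hb
  have hsq : ‖x - b‖ ^ 2 ≤ ‖x - a‖ ^ 2 :=
    pow_le_pow_left₀ (norm_nonneg _) h 2
  have hexp : ‖x - b‖ ^ 2 = ‖x - a‖ ^ 2 - 2 * ⟪x - a, b - a⟫ + ‖b - a‖ ^ 2 := by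
    have : x - b = (x - a) - (b - a) := by abel
    rw [this, @norm_sub_sq_real]
  have h1 : ‖b - a‖ ^ 2 ≤ 2 * ⟪x - a, b - a⟫ := by linarith [hexp ▸ hsq]
  have h2 : ⟪a - x, b - a⟫ = - ⟪x - a, b - a⟫ := by
    rw [show a - x = -(x - a) by abel, inner_neg_left]
  nlinarith [sq_nonneg ‖b - a‖]

lemma far_mem_frontier {A : Set E} {x a : E} (haA : a ∈ A)
    (hmax : ∀ b ∈ A, ‖x - b‖ ≤ ‖x - a‖) (hxa : x ≠ a) : a ∈ frontier A := by
  have hd : (0 : ℝ) < ‖x - a‖ := by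
    rw [norm_pos_iff]; exact sub_ne_zero.mpr hxa
  refine ⟨subset_closure haA, fun hint => ?_⟩
  rw [mem_interior_iff_mem_nhds, Metric.mem_nhds_iff] at hint
  obtain ⟨ε, hε, hball⟩ := hint
  set u : E := ‖x - a‖⁻¹ • (a - x) with hu
  have hnu : ‖u‖ = 1 := by
    rw [hu, norm_smul, norm_sub_rev a x, norm_inv, Real.norm_eq_abs, abs_of_pos hd,
      inv_mul_cancel₀ hd.ne']
  set b : E := a + (ε / 2) • u with hbdef
  have hbA : b ∈ A := by
    apply hball
    rw [Metric.mem_ball, dist_eq_norm, show b = a + (ε/2) • u from hbdef,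
      add_sub_cancel_left, norm_smul, hnu, mul_one, Real.norm_eq_abs,
      abs_of_pos (half_pos hε)]
    linarith
  have hxb : x - b = (1 + (ε / 2) * ‖x - a‖⁻¹) • (x - a) := by
    rw [hbdef, hu]
    module
  have hnb : ‖x - b‖ = (1 + (ε / 2) * ‖x - a‖⁻¹) * ‖x - a‖ := by
    rw [hxb, norm_smul, Real.norm_eq_abs, abs_of_pos]
    positivity
  have := hmax b hbA
  rw [hnb] at this
  nlinarith [mul_pos (mul_pos (half_pos hε) (inv_pos.mpr hd)) hd]

theorem statement_5 {n : ℕ} (A : Set (EuclideanSpace ℝ (Fin n)))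
    (hne : A.Nonempty) (hcp : IsCompact A) (hcv : Convex ℝ A)
    (r : ℝ) (hr : 0 < r) (hneg : IsNegSConvex r (farExceeds r A) A) :
    ∀ x ∈ farExceeds r A, ∃ a, farPoints A x = {a} := by
  intro x hx
  obtain ⟨c, hcA, hc⟩ := hx
  have hcont : ContinuousOn (fun b => ‖x - b‖) A :=
    (continuous_const.sub continuous_id).norm.continuousOn
  obtain ⟨a, haA, hamax'⟩ := hcp.exists_isMaxOn hne hcont
  have hamax : ∀ b ∈ A, ‖x - b‖ ≤ ‖x - a‖ := fun b hb => hamax' hb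
  have hra : r < ‖x - a‖ := lt_of_lt_of_le hc (hamax c hcA)
  have key : ∀ p ∈ farPoints A x,
      p ∈ frontier A ∧ ‖x - p‖⁻¹ • (p - x) ∈ proxNormalCone A p ∧
        ‖‖x - p‖⁻¹ • (p - x)‖ = 1 ∧ r < ‖x - p‖ := by
    rintro p ⟨hpA, hpmax⟩
    have hrp : r < ‖x - p‖ := lt_of_lt_of_le hc (hpmax c hcA)
    have hd : (0 : ℝ) < ‖x - p‖ := lt_trans hr hrp
    have hxp : x ≠ p := by
      intro h; rw [h, sub_self, norm_zero] at hd; exact lt_irrefl _ hd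
    refine ⟨far_mem_frontier hpA hpmax hxp, ⟨0, le_refl _, fun b hb => ?_⟩, ?_, hrp⟩
    · have h0 : ⟪p - x, b - p⟫ ≤ 0 := far_inner_nonpos hpmax hb
      rw [real_inner_smul_left, zero_mul]
      exact mul_nonpos_of_nonneg_of_nonpos (inv_nonneg.mpr hd.le) h0
    · rw [norm_smul, norm_sub_rev p x, norm_inv, Real.norm_eq_abs, abs_of_pos hd,
        inv_mul_cancel₀ hd.ne']
  refine ⟨a, ?_⟩
  have hfa : a ∈ farPoints A x := ⟨haA, hamax⟩
  ext b
  simp only [Set.mem_singleton_iff]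
  constructor
  · intro hb
    by_contra hba
    obtain ⟨hbf, hbN, hbn, hrb⟩ := key b hb
    obtain ⟨haf, haN, han, _⟩ := key a hfa
    apply hneg
    refine ⟨b, hbf, a, haf, hba, _, hbN, hbn, _, haN, han,
      ‖x - b‖, hrb, ‖x - a‖, hra, ?_, ?_⟩
    · have h1 : b - ‖x - b‖ • (‖x - b‖⁻¹ • (b - x)) = x := by
        rw [smul_smul, mul_inv_cancel₀ (by linarith : (0:ℝ) < ‖x - b‖).ne', one_smul]
        abel
      have h2 : a - ‖x - a‖ • (‖x - a‖⁻¹ • (a - x)) = x := by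
        rw [smul_smul, mul_inv_cancel₀ (by linarith : (0:ℝ) < ‖x - a‖).ne', one_smul]
        abel
      rw [h1, h2]
    · have h1 : b - ‖x - b‖ • (‖x - b‖⁻¹ • (b - x)) = x := by
        rw [smul_smul, mul_inv_cancel₀ (by linarith : (0:ℝ) < ‖x - b‖).ne', one_smul]
        abel
      rw [h1]; exact ⟨c, hcA, hc⟩
  · rintro rfl; exact hfa
end

section
/- Let A ⊆ ℝⁿ be a nonempty closed set with nonempty interior, and let r > 0. If A is r-spherically supported, then A is epi-Lipschitz. -/
open scoped RealInnerProductSpace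

variable {E : Type*} [NormedAddCommGroup E] [InnerProductSpace ℝ E]

lemma star_lemma {A : Set E} (hcl : IsClosed A) {r : ℝ} (hr : 0 < r)
    (hss : IsSphericallySupported r A) {q : E} (hq : q ∈ interior A)
    {x : E} (hx : x ∈ A) {s : ℝ} (hs0 : 0 ≤ s) (hs1 : s ≤ 1) :
    q + s • (x - q) ∈ A := by
  by_contra hcon
  have hxq : x ≠ q := by
    rintro rfl
    simp only [sub_self, smul_zero, add_zero] at hcon
    exact hcon (interior_subset hq)
  have hnq : (0:ℝ) < ‖x - q‖ := by
    rw [norm_pos_iff]; exact sub_ne_zero.2 hxq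
  obtain ⟨ε, hε, hball⟩ := Metric.isOpen_iff.1 isOpen_interior q hq
  set f : ℝ → E := fun t => q + t • (x - q) with hf
  have hfc : Continuous f := by
    apply continuous_const.add
    exact continuous_id.smul continuous_const
  set S : Set ℝ := {t : ℝ | t ∈ Set.Icc (0:ℝ) 1 ∧ f t ∉ A} with hSdef
  have hsS : s ∈ S := ⟨⟨hs0, hs1⟩, hcon⟩
  have hSne : S.Nonempty := ⟨s, hsS⟩
  have hbdd : BddBelow S := ⟨0, fun t ht => ht.1.1⟩
  set t0 := sInf S with ht0
  have ht0s : t0 ≤ s := csInf_le hbdd hsS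
  have hs1' : s < 1 := by
    rcases lt_or_eq_of_le hs1 with h | h
    · exact h
    · exfalso; apply hcon; rw [h]
      simpa [hf] using hx
  have hsmall : ∀ t : ℝ, 0 ≤ t → t < ε / ‖x - q‖ → f t ∈ A := by
    intro t ht htε
    apply interior_subset
    apply hball
    rw [Metric.mem_ball, dist_eq_norm]
    have h1 : f t - q = t • (x - q) := by simp [hf]
    rw [h1, norm_smul, Real.norm_eq_abs, abs_of_nonneg ht]
    calc t * ‖x - q‖ < (ε / ‖x - q‖) * ‖x - q‖ := mul_lt_mul_of_pos_right htε hnq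
      _ = ε := div_mul_cancel₀ _ (ne_of_gt hnq)
  have ht0pos : 0 < t0 := by
    have hlb : ∀ t ∈ S, ε / ‖x - q‖ ≤ t := by
      intro t ht
      by_contra hlt
      push_neg at hlt
      exact ht.2 (hsmall t ht.1.1 hlt)
    exact lt_of_lt_of_le (div_pos hε hnq) (le_csInf hSne hlb)
  have ht0lt1 : t0 < 1 := lt_of_le_of_lt ht0s hs1'
  have hbefore : ∀ t : ℝ, 0 ≤ t → t < t0 → f t ∈ A := by
    intro t ht htlt
    by_contra h
    have hmem : t ∈ S := ⟨⟨ht, le_of_lt (htlt.trans ht0lt1)⟩, h⟩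
    exact absurd (csInf_le hbdd hmem) (not_le.2 htlt)
  have haA : f t0 ∈ A := by
    have htend : Filter.Tendsto f (nhdsWithin t0 (Set.Iio t0)) (nhds (f t0)) :=
      (hfc.tendsto t0).mono_left nhdsWithin_le_nhds
    refine hcl.mem_of_tendsto htend ?_
    have hIoo : Set.Ioo 0 t0 ∈ nhdsWithin t0 (Set.Iio t0) :=
      Ioo_mem_nhdsLT_of_mem ⟨ht0pos, le_refl t0⟩
    filter_upwards [hIoo] with t ht
    exact hbefore t (le_of_lt ht.1) ht.2
  have hnotint : f t0 ∉ interior A := by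
    intro hint2
    obtain ⟨ε2, hε2, hball2⟩ := Metric.isOpen_iff.1 isOpen_interior _ hint2
    obtain ⟨u, huS, hu⟩ := exists_lt_of_csInf_lt hSne
      (lt_add_of_pos_right t0 (div_pos hε2 hnq))
    have htu : t0 ≤ u := csInf_le hbdd huS
    apply huS.2
    apply interior_subset
    apply hball2
    rw [Metric.mem_ball, dist_eq_norm]
    have h2 : f u - f t0 = (u - t0) • (x - q) := by
      simp only [hf]
      module
    rw [h2, norm_smul, Real.norm_eq_abs, abs_of_nonneg (sub_nonneg.2 htu)]
    calc (u - t0) * ‖x - q‖ < (ε2 / ‖x - q‖) * ‖x - q‖ :=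
          mul_lt_mul_of_pos_right (by linarith) hnq
      _ = ε2 := div_mul_cancel₀ _ (ne_of_gt hnq)
  have hfront : f t0 ∈ frontier A := by
    rw [frontier, hcl.closure_eq]
    exact ⟨haA, hnotint⟩
  obtain ⟨ζ, _, hζne, hineq⟩ := hss (f t0) hfront
  have hx' := hineq x hx
  have hq' := hineq q (interior_subset hq)
  have hxa : x - f t0 = (1 - t0) • (x - q) := by
    simp only [hf]; module
  have hqa : q - f t0 = (-t0) • (x - q) := by
    simp only [hf]; module
  set c := ⟪‖ζ‖⁻¹ • ζ, x - q⟫ with hc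
  rw [hxa, real_inner_smul_right, norm_smul, Real.norm_eq_abs,
    abs_of_nonneg (by linarith : (0:ℝ) ≤ 1 - t0)] at hx'
  rw [hqa, real_inner_smul_right, norm_smul, Real.norm_eq_abs,
    abs_of_nonpos (by linarith : -t0 ≤ 0)] at hq'
  have h2r : 0 < 1 / (2 * r) := by positivity
  have hN : 0 < ‖x - q‖ ^ 2 := by positivity
  -- from hq' : -t0 * c ≤ -(1/(2r)) * (t0 * ‖x-q‖)^2, so t0 * c > 0, hence c > 0
  have htc : 0 < t0 * c := by nlinarith [mul_pos h2r (mul_pos (mul_pos ht0pos ht0pos) hN)]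
  have hcpos : 0 < c := by nlinarith [htc, ht0pos]
  -- from hx' : (1 - t0) * c ≤ -(1/(2r)) * ((1-t0) * ‖x-q‖)^2 ≤ 0, contradiction
  nlinarith [hx', mul_pos (by linarith : (0:ℝ) < 1 - t0) hcpos,
    mul_nonneg (le_of_lt h2r) (sq_nonneg ((1 - t0) * ‖x - q‖))]

theorem statement_6 {n : ℕ} (A : Set (EuclideanSpace ℝ (Fin n)))
    (hne : A.Nonempty) (hcl : IsClosed A) (hint : (interior A).Nonempty)
    (r : ℝ) (hr : 0 < r) (hss : IsSphericallySupported r A) :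
    IsEpiLipschitz A := by
  intro a _
  obtain ⟨p, hp⟩ := hint
  obtain ⟨ρ, hρ, hball⟩ := Metric.isOpen_iff.1 isOpen_interior p hp
  refine ⟨p - a, min ρ 1 / 2, by positivity, ?_⟩
  intro a' ha' hd t ht0 htε w hw
  have hq : a' + w ∈ interior A := by
    apply hball
    rw [Metric.mem_ball, dist_eq_norm]
    have h1 : a' + w - p = (a' - a) + (w - (p - a)) := by abel
    calc ‖a' + w - p‖ = ‖(a' - a) + (w - (p - a))‖ := by rw [h1]
      _ ≤ ‖a' - a‖ + ‖w - (p - a)‖ := norm_add_le _ _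
      _ < min ρ 1 / 2 + min ρ 1 / 2 := add_lt_add hd hw
      _ ≤ ρ := by have := min_le_left ρ 1; linarith
  have ht1 : t ≤ 1 := by
    have := min_le_right ρ 1
    linarith
  have hstar := star_lemma hcl hr hss hq ha' (s := 1 - t) (by linarith) (by linarith)
  have heq : (a' + w) + (1 - t) • (a' - (a' + w)) = a' + t • w := by module
  rwa [heq] at hstar
end

section
/- Let A ⊆ ℝⁿ be a nonempty closed set with nonempty interior, and let r > 0. If A is r-spherically supported, then A is locally convex: for every a in the frontier of A there exists δ > 0 such that the intersection of A with the closed ball of center a and radius δ is convex. -/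
open scoped RealInnerProductSpace

variable {E : Type*} [NormedAddCommGroup E] [InnerProductSpace ℝ E]

set_option maxHeartbeats 1600000 in
theorem statement_7 {n : ℕ} (A : Set (EuclideanSpace ℝ (Fin n)))
    (hne : A.Nonempty) (hcl : IsClosed A) (hint : (interior A).Nonempty)
    (r : ℝ) (hr : 0 < r) (hss : IsSphericallySupported r A) :
    ∀ a ∈ frontier A, ∃ δ : ℝ, 0 < δ ∧ Convex ℝ (A ∩ Metric.closedBall a δ) := by
  have hconv : Convex ℝ A := by
    intro x hx y hy s t hs ht hst
    set m := s • x + t • y with hmdef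
    by_contra hm
    -- interior ball
    obtain ⟨z₀, hz₀⟩ := hint
    obtain ⟨ρ, hρ, hball⟩ := Metric.isOpen_iff.1 isOpen_interior z₀ hz₀
    have hz₀A : z₀ ∈ A := interior_subset hz₀
    set ρ' := ρ / 2 with hρ'def
    have hρ' : 0 < ρ' := by positivity
    have hball' : Metric.closedBall z₀ ρ' ⊆ A := fun w hw =>
      interior_subset (hball ((Metric.closedBall_subset_ball (by linarith)) hw))
    -- the segment from z₀ to m
    set γ : ℝ → EuclideanSpace ℝ (Fin n) := fun u => z₀ + u • (m - z₀) with hγdef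
    have hγcont : Continuous γ := by
      apply Continuous.add continuous_const
      exact continuous_id.smul continuous_const
    set T : Set ℝ := Set.Icc (0 : ℝ) 1 ∩ γ ⁻¹' A with hTdef
    have hTcomp : IsCompact T := isCompact_Icc.inter_right (hcl.preimage hγcont)
    have h0T : (0 : ℝ) ∈ T := by
      constructor
      · exact ⟨le_refl 0, zero_le_one⟩
      · show γ 0 ∈ A
        simp [hγdef, hz₀A]
    have hTne : T.Nonempty := ⟨0, h0T⟩
    set τ := sSup T with hτdef
    have hτT : τ ∈ T := hTcomp.sSup_mem hTne
    have hτ0 : 0 ≤ τ := hτT.1.1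
    have hτle1 : τ ≤ 1 := hτT.1.2
    have hqA : γ τ ∈ A := hτT.2
    set q := γ τ with hqdef
    have hτne1 : τ ≠ 1 := by
      intro h
      apply hm
      have : q = m := by
        show z₀ + τ • (m - z₀) = m
        rw [h, one_smul]
        abel
      rw [← this]
      exact hqA
    have hτlt1 : τ < 1 := lt_of_le_of_ne hτle1 hτne1
    -- q is a frontier point
    have hqnotint : q ∉ interior A := by
      intro hqi
      have hnhds : γ ⁻¹' interior A ∈ nhds τ :=
        hγcont.continuousAt.preimage_mem_nhds (isOpen_interior.mem_nhds hqi)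
      obtain ⟨ε, hε, hb⟩ := Metric.mem_nhds_iff.1 hnhds
      set t' := min 1 (τ + ε / 2) with ht'def
      have hτt' : τ ≤ t' := le_min hτle1 (by linarith)
      have ht'τ : t' - τ ≤ ε / 2 := by
        have := min_le_right 1 (τ + ε / 2)
        linarith
      have ht'ball : t' ∈ Metric.ball τ ε := by
        rw [Metric.mem_ball, Real.dist_eq, abs_of_nonneg (by linarith)]
        linarith
      have hmem : γ t' ∈ A := interior_subset (show γ t' ∈ interior A from hb ht'ball)
      have ht'T : t' ∈ T := ⟨⟨by linarith, min_le_left _ _⟩, hmem⟩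
      have h1 : t' ≤ τ := le_csSup hTcomp.bddAbove ht'T
      have h2 : τ < t' := lt_min hτlt1 (by linarith)
      linarith
    have hqf : q ∈ frontier A := by
      rw [hcl.frontier_eq]
      exact ⟨hqA, hqnotint⟩
    -- the spherical support at q
    obtain ⟨ζ, _, hζne, hν⟩ := hss q hqf
    set ν := ‖ζ‖⁻¹ • ζ with hνdef
    have hνnorm : ‖ν‖ = 1 := norm_smul_inv_norm hζne
    have hle : ∀ z ∈ A, ⟪ν, z - q⟫ ≤ 0 := by
      intro z hz
      have h1 := hν z hz
      have h2 : 0 ≤ 1 / (2 * r) * ‖z - q‖ ^ 2 := by positivity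
      linarith
    -- the normal points away from the interior ball
    have hz₁A : z₀ + ρ' • ν ∈ A := by
      apply hball'
      rw [Metric.mem_closedBall, dist_eq_norm, add_sub_cancel_left, norm_smul, hνnorm]
      simp [abs_of_pos hρ']
    have key1 : ⟪ν, z₀ - q⟫ + ρ' ≤ 0 := by
      have h1 := hle _ hz₁A
      have e : (z₀ + ρ' • ν) - q = (z₀ - q) + ρ' • ν := by abel
      rw [e, inner_add_right, real_inner_smul_right, real_inner_self_eq_norm_sq, hνnorm] at h1
      nlinarith
    have hq_eq : q = z₀ + τ • (m - z₀) := rfl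
    have eq1 : z₀ - q = -(τ • (m - z₀)) := by
      rw [hq_eq]
      abel
    have key2 : ρ' ≤ τ * ⟪ν, m - z₀⟫ := by
      rw [eq1, inner_neg_right, real_inner_smul_right] at key1
      linarith
    have eq2 : m - q = (1 - τ) • (m - z₀) := by
      rw [hq_eq, sub_smul, one_smul]
      abel
    have key3 : ⟪ν, m - q⟫ = (1 - τ) * ⟪ν, m - z₀⟫ := by
      rw [eq2, real_inner_smul_right]
    have eq3 : m - q = s • (x - q) + t • (y - q) := by
      rw [hmdef, smul_sub, smul_sub]
      rw [show s • x - s • q + (t • y - t • q) = s • x + t • y - (s + t) • q by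
        rw [add_smul]; abel]
      rw [hst, one_smul]
    have key4 : ⟪ν, m - q⟫ ≤ 0 := by
      rw [eq3, inner_add_right, real_inner_smul_right, real_inner_smul_right]
      have h1 := hle x hx
      have h2 := hle y hy
      nlinarith
    -- contradiction
    have hXpos : 0 < ⟪ν, m - z₀⟫ := by
      by_contra hX
      push_neg at hX
      nlinarith [mul_nonneg hτ0 (neg_nonneg.2 hX)]
    nlinarith [mul_pos (by linarith : (0:ℝ) < 1 - τ) hXpos]
  intro a _
  exact ⟨1, one_pos, hconv.inter (convex_closedBall a 1)⟩
end

section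
/- Let A ⊆ ℝⁿ be a closed set. Then the interior of A equals the union over a ∈ A of the interiors of the connected components of A, and the frontier of A equals the union over a ∈ A of the frontiers of the connected components of A (where the connected component of A containing a is viewed as a subset of ℝⁿ, and interior and frontier are taken in ℝⁿ). -/
open scoped RealInnerProductSpace

variable {E : Type*} [NormedAddCommGroup E] [InnerProductSpace ℝ E]

theorem statement_8 {n : ℕ} (A : Set (EuclideanSpace ℝ (Fin n)))
    (hcl : IsClosed A) :
    interior A = ⋃ a ∈ A, interior (connectedComponentIn A a) ∧
    frontier A = ⋃ a ∈ A, frontier (connectedComponentIn A a) := by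
  
  have hsubA : ∀ a, interior (connectedComponentIn A a) ⊆ interior A :=
    fun a => interior_mono (connectedComponentIn_subset A a)
  have hint : interior A = ⋃ a ∈ A, interior (connectedComponentIn A a) := by
    apply Set.Subset.antisymm
    · intro x hx
      have hxA : x ∈ A := interior_subset hx
      have hopen : IsOpen (connectedComponentIn (interior A) x) :=
        isOpen_interior.connectedComponentIn
      have hmem : x ∈ connectedComponentIn (interior A) x := mem_connectedComponentIn hx
      have hsub : connectedComponentIn (interior A) x ⊆ connectedComponentIn A x :=
        connectedComponentIn_mono x interior_subset
      have : x ∈ interior (connectedComponentIn A x) :=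
        interior_maximal hsub hopen hmem
      exact Set.mem_biUnion hxA this
    · exact Set.iUnion₂_subset fun a _ => hsubA a
  have hclC : ∀ a ∈ A, IsClosed (connectedComponentIn A a) := by
    intro a ha
    have hconn : IsPreconnected (closure (connectedComponentIn A a)) :=
      (isPreconnected_connectedComponentIn).closure
    have hsub : closure (connectedComponentIn A a) ⊆ connectedComponentIn A a :=
      hconn.subset_connectedComponentIn
        (subset_closure (mem_connectedComponentIn ha))
        (closure_minimal (connectedComponentIn_subset A a) hcl)
    exact isClosed_of_closure_subset hsub
  refine ⟨hint, ?_⟩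
  apply Set.Subset.antisymm
  · intro x hx
    have hxA : x ∈ A := hcl.frontier_subset hx
    have hxC : x ∈ connectedComponentIn A x := mem_connectedComponentIn hxA
    have hxnI : x ∉ interior (connectedComponentIn A x) := fun h =>
      hx.2 (hsubA x h)
    refine Set.mem_biUnion hxA ?_
    rw [frontier, (hclC x hxA).closure_eq]
    exact ⟨hxC, hxnI⟩
  · refine Set.iUnion₂_subset fun a ha => ?_
    intro x hx
    rw [frontier, (hclC a ha).closure_eq] at hx
    obtain ⟨hxC, hxnI⟩ := hx
    have hxA : x ∈ A := connectedComponentIn_subset A a hxC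
    refine ⟨subset_closure hxA, fun hxint => hxnI ?_⟩
    rw [hint] at hxint
    obtain ⟨b, ⟨hb, hxb⟩⟩ := Set.mem_iUnion₂.1 hxint
    have heq : connectedComponentIn A b = connectedComponentIn A a := by
      have h1 : x ∈ connectedComponentIn A b := interior_subset hxb
      rw [connectedComponentIn_eq h1, connectedComponentIn_eq hxC]
    rwa [heq] at hxb
end

section
/- Let A ⊆ ℝⁿ be a nonempty closed set with nonempty interior, and let r > 0. If A is r-spherically supported, then every connected component of A is convex. -/
open scoped RealInnerProductSpace

variable {E : Type*} [NormedAddCommGroup E] [InnerProductSpace ℝ E]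

set_option maxHeartbeats 1000000 in
theorem statement_9 {n : ℕ} (A : Set (EuclideanSpace ℝ (Fin n)))
    (hne : A.Nonempty) (hcl : IsClosed A) (hint : (interior A).Nonempty)
    (r : ℝ) (hr : 0 < r) (hss : IsSphericallySupported r A) :
    ∀ a ∈ A, Convex ℝ (connectedComponentIn A a) := by
  have hA : Convex ℝ A := by
    intro x hx y hy s t hs ht hst
    by_contra hz
    obtain ⟨y0, hy0⟩ := hint
    set z := s • x + t • y with hzdef
    have hy0A : y0 ∈ A := interior_subset hy0
    set f : ℝ → EuclideanSpace ℝ (Fin n) := fun τ => y0 + τ • (z - y0) with hf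
    have hfc : Continuous f := by
      apply continuous_const.add
      exact continuous_id.smul continuous_const
    set S : Set ℝ := Set.Icc (0:ℝ) 1 ∩ f ⁻¹' A with hSdef
    have hS0 : (0:ℝ) ∈ S := by
      refine ⟨⟨le_refl 0, zero_le_one⟩, ?_⟩
      simp only [Set.mem_preimage, hf, zero_smul, add_zero]
      exact hy0A
    have hScompact : IsCompact S :=
      isCompact_Icc.inter_right (hcl.preimage hfc)
    obtain ⟨t₀, ht₀S, ht₀max⟩ := hScompact.exists_isGreatest ⟨0, hS0⟩
    set a := f t₀ with ha_def
    have haA : a ∈ A := ht₀S.2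
    have ht00 : (0:ℝ) ≤ t₀ := ht₀S.1.1
    have hf1 : f 1 = z := by simp [hf]
    have ht₀lt1 : t₀ < 1 := by
      rcases lt_or_eq_of_le ht₀S.1.2 with h | h
      · exact h
      · exact absurd (h ▸ haA : f 1 ∈ A) (by rw [hf1]; exact hz)
    -- a is in the closure of the complement
    have hacl : a ∈ closure Aᶜ := by
      have hτlim : Filter.Tendsto (fun k : ℕ => t₀ + (1 - t₀) * (1 / (k + 1 : ℝ)))
          Filter.atTop (nhds t₀) := by
        have := (tendsto_one_div_add_atTop_nhds_zero_nat.const_mul (1 - t₀)).const_add t₀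
        simpa using this
      refine mem_closure_of_tendsto ((hfc.tendsto t₀).comp hτlim) ?_
      filter_upwards with k
      intro hmem
      have hk1 : 0 < (1 / (k + 1 : ℝ)) := by positivity
      have hk2 : (1 / (k + 1 : ℝ)) ≤ 1 := by
        rw [div_le_one (by positivity)]
        linarith [Nat.cast_nonneg (α := ℝ) k]
      have hpos : 0 < (1 - t₀) * (1 / (k + 1 : ℝ)) :=
        mul_pos (by linarith) hk1
      have hle1 : t₀ + (1 - t₀) * (1 / (k + 1 : ℝ)) ≤ 1 := by
        nlinarith
      have : t₀ + (1 - t₀) * (1 / (k + 1 : ℝ)) ∈ S :=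
        ⟨⟨by linarith, hle1⟩, by simpa using hmem⟩
      have := ht₀max this
      linarith
    have hafr : a ∈ frontier A := by
      rw [frontier_eq_closure_inter_closure]
      exact ⟨subset_closure haA, hacl⟩
    obtain ⟨ζ, hζcone, hζne, hineq⟩ := hss a hafr
    set u := ‖ζ‖⁻¹ • ζ with hu
    have hc : 0 < 1 / (2 * r) := by positivity
    have hxa : ⟪u, x - a⟫ ≤ 0 :=
      (hineq x hx).trans (by nlinarith [sq_nonneg ‖x - a‖])
    have hya : ⟪u, y - a⟫ ≤ 0 :=
      (hineq y hy).trans (by nlinarith [sq_nonneg ‖y - a‖])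
    have hza : ⟪u, z - a⟫ ≤ 0 := by
      have hdz : z - a = s • (x - a) + t • (y - a) := by
        rw [hzdef]
        have : s • x + t • y - a = s • (x - a) + t • (y - a) + (s + t - 1) • a := by
          module
        rw [this, hst]
        simp
      rw [hdz, inner_add_right, real_inner_smul_right, real_inner_smul_right]
      nlinarith
    have hy0ne : y0 ≠ a := by
      intro h
      have hop : IsOpen (interior A) := isOpen_interior
      have : a ∈ interior A := h ▸ hy0
      obtain ⟨w, hw1, hw2⟩ := (_root_.mem_closure_iff.mp hacl) _ hop this
      exact hw2 (interior_subset hw1)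
    have hy0a : ⟪u, y0 - a⟫ < 0 := by
      have h1 := hineq y0 hy0A
      have h2 : 0 < ‖y0 - a‖ := by
        rw [norm_pos_iff, sub_ne_zero]; exact hy0ne
      have h3 : 0 < 1 / (2 * r) * ‖y0 - a‖ ^ 2 := mul_pos hc (pow_pos h2 2)
      linarith
    -- express z - a and y0 - a in terms of z - y0
    have hda : z - a = (1 - t₀) • (z - y0) := by
      rw [ha_def, hf]; module
    have hdb : y0 - a = (-t₀) • (z - y0) := by
      rw [ha_def, hf]; module
    rw [hda, real_inner_smul_right] at hza
    rw [hdb, real_inner_smul_right] at hy0a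
    have hp : 0 < t₀ * ⟪u, z - y0⟫ := by linarith
    have hppos : 0 < ⟪u, z - y0⟫ := by
      rcases le_or_gt ⟪u, z - y0⟫ 0 with h | h
      · exact absurd hp (not_lt.mpr (mul_nonpos_of_nonneg_of_nonpos ht00 h))
      · exact h
    have : 0 < (1 - t₀) * ⟪u, z - y0⟫ := mul_pos (by linarith) hppos
    linarith
  intro a ha
  have hcomp : connectedComponentIn A a = A :=
    (connectedComponentIn_subset A a).antisymm
      (hA.isPreconnected.subset_connectedComponentIn ha subset_rfl)
  rw [hcomp]
  exact hA
end

section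
/- Let A ⊆ ℝⁿ be a nonempty closed proper subset of ℝⁿ with nonempty interior, and let r > 0. If A is r-spherically supported, then every connected component of A that has nonempty interior is r-strongly convex. -/
open scoped RealInnerProductSpace

variable {E : Type*} [NormedAddCommGroup E] [InnerProductSpace ℝ E]

theorem statement_10 {n : ℕ} (A : Set (EuclideanSpace ℝ (Fin n)))
    (hne : A.Nonempty) (hcl : IsClosed A) (hproper : A ≠ Set.univ)
    (hint : (interior A).Nonempty) (r : ℝ) (hr : 0 < r)
    (hss : IsSphericallySupported r A) :
    ∀ a ∈ A, (interior (connectedComponentIn A a)).Nonempty →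
      IsStronglyConvex r (connectedComponentIn A a) := by
  classical
  -- choose a unit normal at each frontier point
  have hchoice : ∀ a ∈ frontier A, ∃ ν : EuclideanSpace ℝ (Fin n),
      ‖ν‖ = 1 ∧ ∀ x ∈ A, ⟪ν, x - a⟫ ≤ -(1 / (2 * r)) * ‖x - a‖ ^ 2 := by
    intro a ha
    obtain ⟨ζ, -, hζ0, h⟩ := hss a ha
    refine ⟨‖ζ‖⁻¹ • ζ, ?_, h⟩
    rw [norm_smul, norm_inv, norm_norm, inv_mul_cancel₀ (norm_ne_zero_iff.mpr hζ0)]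
  choose! ν hν1 hν2 using hchoice
  -- multiplied-out form of the support inequality
  have hν2' : ∀ a ∈ frontier A, ∀ x ∈ A,
      2 * r * ⟪ν a, x - a⟫ ≤ -‖x - a‖ ^ 2 := by
    intro a ha x hx
    have h := hν2 a ha x hx
    have h2 := mul_le_mul_of_nonneg_left h (by linarith : (0:ℝ) ≤ 2 * r)
    have e : 2 * r * (-(1 / (2 * r)) * ‖x - a‖ ^ 2) = -‖x - a‖ ^ 2 := by
      field_simp
    linarith [h2, e.le, e.ge]
  -- the frontier is nonempty
  have hfr : (frontier A).Nonempty := by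
    rcases (frontier A).eq_empty_or_nonempty with h | h
    · exfalso
      rcases (isClopen_iff.mp (isClopen_iff_frontier_eq_empty.mpr h)) with h' | h'
      · exact hne.ne_empty h'
      · exact hproper h'
    · exact h
  -- norm expansion for the tangent balls
  have hnorm : ∀ a ∈ frontier A, ∀ x : EuclideanSpace ℝ (Fin n),
      ‖x - (a - r • ν a)‖ ^ 2 = ‖x - a‖ ^ 2 + 2 * r * ⟪ν a, x - a⟫ + r ^ 2 := by
    intro a ha x
    have h1 : x - (a - r • ν a) = (x - a) + r • ν a := by abel
    rw [h1, norm_add_sq_real, real_inner_smul_right,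
      real_inner_comm (x - a) (ν a), norm_smul, Real.norm_eq_abs, abs_of_pos hr,
      hν1 a ha, mul_one]
    ring
  -- membership in the tangent ball
  have hmem : ∀ a ∈ frontier A, ∀ x : EuclideanSpace ℝ (Fin n),
      x ∈ Metric.closedBall (a - r • ν a) r ↔
        ‖x - a‖ ^ 2 + 2 * r * ⟪ν a, x - a⟫ ≤ 0 := by
    intro a ha x
    rw [Metric.mem_closedBall, dist_eq_norm]
    constructor
    · intro h
      have h2 : ‖x - (a - r • ν a)‖ ^ 2 ≤ r ^ 2 :=
        pow_le_pow_left₀ (norm_nonneg _) h 2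
      rw [hnorm a ha x] at h2
      linarith
    · intro h
      have h2 : ‖x - (a - r • ν a)‖ ^ 2 ≤ r ^ 2 := by
        rw [hnorm a ha x]; linarith
      nlinarith [norm_nonneg (x - (a - r • ν a)), hr]
  -- A equals the intersection of the tangent balls
  have hA : A = ⋂ p ∈ (fun a => a - r • ν a) '' frontier A, Metric.closedBall p r := by
    apply Set.Subset.antisymm
    · intro x hx
      refine Set.mem_iInter₂.mpr ?_
      rintro p ⟨a, ha, rfl⟩
      rw [hmem a ha x]
      linarith [hν2' a ha x hx]
    · intro x hx
      by_contra hxA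
      obtain ⟨z, hz⟩ := hint
      set γ : ℝ → EuclideanSpace ℝ (Fin n) := fun s => x + s • (z - x) with hγ
      have hγcont : Continuous γ := by
        apply Continuous.add continuous_const
        exact (continuous_id).smul continuous_const
      set S : Set ℝ := Set.Icc (0:ℝ) 1 ∩ γ ⁻¹' A with hSdef
      have hSne : S.Nonempty := by
        refine ⟨1, ⟨by norm_num, ?_⟩⟩
        show γ 1 ∈ A
        have : γ 1 = z := by simp [hγ]
        rw [this]; exact interior_subset hz
      have hSclosed : IsClosed S := isClosed_Icc.inter (hcl.preimage hγcont)
      have hbdd : BddBelow S := ⟨0, fun s hs => hs.1.1⟩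
      set s₀ : ℝ := sInf S with hs₀def
      have hs₀S : s₀ ∈ S := hSclosed.csInf_mem hSne hbdd
      have hs₀0 : 0 ≤ s₀ := hs₀S.1.1
      have hs₀1 : s₀ ≤ 1 := hs₀S.1.2
      have hwA : γ s₀ ∈ A := hs₀S.2
      have hs₀pos : 0 < s₀ := by
        rcases hs₀0.lt_or_eq with h | h
        · exact h
        · exfalso
          apply hxA
          have : γ s₀ = x := by rw [← h]; simp [hγ]
          rwa [this] at hwA
      have hmin : ∀ s, 0 ≤ s → s < s₀ → γ s ∉ A := by
        intro s h0 hlt hmemA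
        exact absurd (csInf_le hbdd ⟨⟨h0, hlt.le.trans hs₀1⟩, hmemA⟩) (not_le.mpr hlt)
      have hwnotint : γ s₀ ∉ interior A := by
        intro hmemi
        have hnb : γ ⁻¹' interior A ∈ nhds s₀ :=
          hγcont.continuousAt.preimage_mem_nhds (isOpen_interior.mem_nhds hmemi)
        obtain ⟨δ, hδ, hδ'⟩ := Metric.mem_nhds_iff.mp hnb
        set s := s₀ - min (δ / 2) (s₀ / 2) with hsdef
        have hmin_pos : 0 < min (δ / 2) (s₀ / 2) := lt_min (by linarith) (by linarith)
        have hs0 : 0 ≤ s := by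
          have : min (δ / 2) (s₀ / 2) ≤ s₀ / 2 := min_le_right _ _
          simp only [hsdef]; linarith
        have hslt : s < s₀ := by simp only [hsdef]; linarith
        have hsball : s ∈ Metric.ball s₀ δ := by
          rw [Metric.mem_ball, Real.dist_eq]
          have h1 : min (δ / 2) (s₀ / 2) ≤ δ / 2 := min_le_left _ _
          rw [abs_sub_lt_iff]
          constructor <;> simp only [hsdef] <;> linarith
        exact hmin s hs0 hslt (interior_subset (hδ' hsball))
      have hwfront : γ s₀ ∈ frontier A := ⟨subset_closure hwA, hwnotint⟩
      have hs₀lt1 : s₀ < 1 := by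
        rcases hs₀1.lt_or_eq with h | h
        · exact h
        · exfalso
          apply hwnotint
          have : γ s₀ = z := by rw [h]; simp [hγ]
          rwa [this]
      -- the two inner-product inequalities
      have hzw : z - γ s₀ ≠ 0 := by
        intro h
        exact hwnotint (by rw [← sub_eq_zero.mp h]; exact hz)
      have hxw : x - γ s₀ ≠ 0 := by
        intro h
        exact hxA (by rw [sub_eq_zero.mp h]; exact hwA)
      have hnzw : 0 < ‖z - γ s₀‖ ^ 2 := pow_pos (norm_pos_iff.mpr hzw) 2
      have hnxw : 0 < ‖x - γ s₀‖ ^ 2 := pow_pos (norm_pos_iff.mpr hxw) 2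
      have h1 := hν2' (γ s₀) hwfront z (interior_subset hz)
      have hxball : x ∈ Metric.closedBall (γ s₀ - r • ν (γ s₀)) r :=
        Set.mem_iInter₂.mp hx _ ⟨γ s₀, hwfront, rfl⟩
      rw [hmem (γ s₀) hwfront x] at hxball
      have e1 : z - γ s₀ = (1 - s₀) • (z - x) := by
        show z - (x + s₀ • (z - x)) = (1 - s₀) • (z - x)
        rw [sub_smul, one_smul]; abel
      have e2 : x - γ s₀ = (-s₀) • (z - x) := by
        show x - (x + s₀ • (z - x)) = (-s₀) • (z - x)
        rw [neg_smul]; abel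
      set q : ℝ := ⟪ν (γ s₀), z - x⟫ with hq
      have i1 : ⟪ν (γ s₀), z - γ s₀⟫ = (1 - s₀) * q := by
        rw [e1, real_inner_smul_right]
      have i2 : ⟪ν (γ s₀), x - γ s₀⟫ = (-s₀) * q := by
        rw [e2, real_inner_smul_right]
      rw [i1] at h1
      rw [i2] at hxball
      -- h1 : 2r (1-s₀) q ≤ -‖z-w‖² < 0, hxball : ‖x-w‖² - 2r s₀ q ≤ 0
      nlinarith [mul_pos hr hs₀pos, mul_pos hr (by linarith : (0:ℝ) < 1 - s₀)]
  -- conclude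
  have hconv : Convex ℝ A := by
    rw [hA]
    exact convex_iInter fun p => convex_iInter fun _ => convex_closedBall _ _
  intro a₀ ha₀ _
  have hcc : connectedComponentIn A a₀ = A :=
    hconv.isPreconnected.connectedComponentIn ha₀
  rw [hcc]
  exact ⟨(fun a => a - r • ν a) '' frontier A, hfr.image _, hA⟩
end

section
/- Let A ⊆ ℝⁿ be a nonempty closed proper subset of ℝⁿ with nonempty interior, and let r > 0. If A is r-spherically supported, then exactly one connected component of A has nonempty interior. -/
open scoped RealInnerProductSpace

variable {E : Type*} [NormedAddCommGroup E] [InnerProductSpace ℝ E]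

/-!
At a frontier point `a` of an `r`-spherically supported set `A`, the unit normal `ν` gives a
supporting half-space `⟪ν, x - a⟫ ≤ 0` of `A`, and interior points of `A` lie strictly inside it.
If the segment between two interior points `x`, `y` left `interior A`, it would cross the frontier
at some convex combination `a = s • x + t • y`, and then
`0 = ⟪ν, a - a⟫ = s ⟪ν, x - a⟫ + t ⟪ν, y - a⟫ < 0`. Hence `interior A` is convex, so it lies in a
single connected component of `A`, and that component is the only one with nonempty interior.
-/

open Topology

theorem IsPreconnected.inter_frontier_nonempty {X : Type*} [TopologicalSpace X] {s t : Set X}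
    (hs : IsPreconnected s) (hst : (s ∩ t).Nonempty) (hsdt : (s \ t).Nonempty) :
    (s ∩ frontier t).Nonempty := by
  by_contra h
  have hcover : s ⊆ interior t ∪ (closure t)ᶜ := by
    intro z hz
    by_cases hzc : z ∈ closure t
    · exact Or.inl (by_contra fun hzi => h ⟨z, hz, hzc, hzi⟩)
    · exact Or.inr hzc
  have hst' : (s ∩ interior t).Nonempty := by
    obtain ⟨z, hzs, hzt⟩ := hst
    exact ⟨z, hzs, (hcover hzs).resolve_right (not_not.mpr (subset_closure hzt))⟩
  have hsub : s ⊆ interior t :=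
    hs.subset_left_of_subset_union isOpen_interior isClosed_closure.isOpen_compl
      (disjoint_compl_right.mono_left interior_subset_closure) hcover hst'
  obtain ⟨z, hzs, hzt⟩ := hsdt
  exact hzt (interior_subset (hsub hzs))

theorem inner_sub_neg_of_mem_interior {A : Set E} {a ν x : E} (hν : ν ≠ 0)
    (hsupp : ∀ y ∈ A, ⟪ν, y - a⟫ ≤ 0) (hx : x ∈ interior A) : ⟪ν, x - a⟫ < 0 := by
  have hpath : Filter.Tendsto (fun t : ℝ => x + t • ν) (𝓝[>] 0) (𝓝 x) := by
    have : Continuous (fun t : ℝ => x + t • ν) := by fun_prop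
    simpa using (this.tendsto 0).mono_left nhdsWithin_le_nhds
  obtain ⟨t, hxt, ht⟩ :=
    ((hpath.eventually (mem_interior_iff_mem_nhds.mp hx)).and self_mem_nhdsWithin).exists
  have h := hsupp _ hxt
  rw [add_sub_right_comm, inner_add_right, real_inner_smul_right, real_inner_self_eq_norm_sq] at h
  have : 0 < t * ‖ν‖ ^ 2 := mul_pos ht (by positivity)
  linarith

theorem convex_interior_of_forall_mem_frontier_supporting {A : Set E}
    (hsupp : ∀ a ∈ frontier A, ∃ ν ≠ (0 : E), ∀ x ∈ A, ⟪ν, x - a⟫ ≤ 0) :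
    Convex ℝ (interior A) := by
  refine convex_iff_segment_subset.mpr fun x hx y hy => ?_
  by_contra hseg
  obtain ⟨a, ⟨s, t, hs, ht, hst, rfl⟩, ha⟩ :=
    (convex_segment x y).isPreconnected.inter_frontier_nonempty
      ⟨x, left_mem_segment ℝ x y, hx⟩ (Set.sdiff_nonempty.mpr hseg)
  obtain ⟨ν, hν, hνA⟩ := hsupp _ (frontier_interior_subset ha)
  have hcomb : s • (x - (s • x + t • y)) + t • (y - (s • x + t • y)) = 0 := by
    rw [smul_sub, smul_sub, sub_add_sub_comm, ← add_smul, hst, one_smul, sub_self]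
  have hzero := congrArg (fun w => ⟪ν, w⟫) hcomb
  simp only [inner_add_right, real_inner_smul_right, inner_zero_right] at hzero
  set u := ⟪ν, x - (s • x + t • y)⟫
  set v := ⟪ν, y - (s • x + t • y)⟫
  have hmax : max u v < 0 :=
    max_lt (inner_sub_neg_of_mem_interior hν hνA hx) (inner_sub_neg_of_mem_interior hν hνA hy)
  nlinarith [mul_le_mul_of_nonneg_left (le_max_left u v) hs,
    mul_le_mul_of_nonneg_left (le_max_right u v) ht]

theorem IsSphericallySupported.forall_mem_frontier_supporting {r : ℝ} {A : Set E} (hr : 0 ≤ r)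
    (hss : IsSphericallySupported r A) :
    ∀ a ∈ frontier A, ∃ ν ≠ (0 : E), ∀ x ∈ A, ⟪ν, x - a⟫ ≤ 0 := by
  intro a ha
  obtain ⟨ζ, -, hζ, hζA⟩ := hss a ha
  refine ⟨‖ζ‖⁻¹ • ζ, smul_ne_zero (inv_ne_zero (norm_ne_zero_iff.mpr hζ)) hζ, fun x hx => ?_⟩
  have : 0 ≤ 1 / (2 * r) * ‖x - a‖ ^ 2 := by positivity
  linarith [hζA x hx]

theorem existsUnique_connectedComponentIn_interior_nonempty {X : Type*} [TopologicalSpace X]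
    {A : Set X} (hpre : IsPreconnected (interior A)) (hint : (interior A).Nonempty) :
    ∃! C : Set X, (∃ a ∈ A, C = connectedComponentIn A a) ∧ (interior C).Nonempty := by
  obtain ⟨x, hx⟩ := hint
  have hcomp : interior A ⊆ connectedComponentIn A x :=
    hpre.subset_connectedComponentIn hx interior_subset
  refine ⟨connectedComponentIn A x,
    ⟨⟨x, interior_subset hx, rfl⟩, x, interior_maximal hcomp isOpen_interior hx⟩, ?_⟩
  rintro _ ⟨⟨a, -, rfl⟩, y, hy⟩
  have hyA : y ∈ interior A := interior_mono (connectedComponentIn_subset A a) hy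
  rw [connectedComponentIn_eq (interior_subset hy), connectedComponentIn_eq (hcomp hyA)]

theorem statement_11_general {n : ℕ} (A : Set (EuclideanSpace ℝ (Fin n)))
    (hint : (interior A).Nonempty) (r : ℝ) (hr : 0 < r)
    (hss : IsSphericallySupported r A) :
    ∃! C : Set (EuclideanSpace ℝ (Fin n)),
      (∃ a ∈ A, C = connectedComponentIn A a) ∧ (interior C).Nonempty :=
  existsUnique_connectedComponentIn_interior_nonempty
    (convex_interior_of_forall_mem_frontier_supporting
      (hss.forall_mem_frontier_supporting hr.le)).isPreconnected hint

theorem statement_11 {n : ℕ} (A : Set (EuclideanSpace ℝ (Fin n)))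
    (hne : A.Nonempty) (hcl : IsClosed A) (hproper : A ≠ Set.univ)
    (hint : (interior A).Nonempty) (r : ℝ) (hr : 0 < r)
    (hss : IsSphericallySupported r A) :
    ∃! C : Set (EuclideanSpace ℝ (Fin n)),
      (∃ a ∈ A, C = connectedComponentIn A a) ∧ (interior C).Nonempty :=
  statement_11_general A hint r hr hss
end

section
/- Let A ⊆ ℝⁿ be a nonempty closed bounded set and let r > 0. Then A is r-strongly convex if and only if for every a in the frontier of A and every nonzero ζ ∈ N_A^P(a), one has ⟨ζ/‖ζ‖, x − a⟩ ≤ −(1/(2r))‖x − a‖² for all x ∈ A. -/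
open scoped RealInnerProductSpace

variable {E : Type*} [NormedAddCommGroup E] [InnerProductSpace ℝ E]

private lemma norm_combo_sq (p q : E) (t : ℝ) :
    ‖t • p + (1 - t) • q‖ ^ 2 =
      t * ‖p‖ ^ 2 + (1 - t) * ‖q‖ ^ 2 - t * (1 - t) * ‖p - q‖ ^ 2 := by
  have h1 := norm_add_sq_real (t • p) ((1 - t) • q)
  have h2 := norm_sub_sq_real p q
  simp only [norm_smul, real_inner_smul_left, real_inner_smul_right, Real.norm_eq_abs] at h1
  nlinarith [sq_abs t, sq_abs (1 - t), abs_nonneg t, abs_nonneg (1 - t), sq_nonneg t]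

private lemma ball_step {r : ℝ} (hr : 0 < r) {c a x u : E} (hu : ‖u‖ = 1)
    (ha : ‖a - c‖ ≤ r) (hx : ‖x - c‖ ≤ r) {ε : ℝ} (hε0 : 0 ≤ ε) (hε1 : ε ≤ 1) :
    ‖a + ε • (x - a) + (ε * (1 - ε) * ‖x - a‖ ^ 2 / (2 * r)) • u - c‖ ≤ r := by
  have hε1' : (0:ℝ) ≤ 1 - ε := by linarith
  set s : ℝ := ε * (1 - ε) * ‖x - a‖ ^ 2 with hs
  have hs0 : 0 ≤ s := mul_nonneg (mul_nonneg hε0 hε1') (sq_nonneg _)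
  set w : E := (1 - ε) • (a - c) + ε • (x - c) with hw
  have hwsq : ‖w‖ ^ 2 = (1 - ε) * ‖a - c‖ ^ 2 + ε * ‖x - c‖ ^ 2 - ε * (1 - ε) * ‖x - a‖ ^ 2 := by
    have h := norm_combo_sq (a - c) (x - c) (1 - ε)
    have h3 : (1 : ℝ) - (1 - ε) = ε := by ring
    rw [h3] at h
    have h4 : a - c - (x - c) = -(x - a) := by abel
    rw [h4, norm_neg] at h
    rw [hw, h]; ring
  have ha2 : ‖a - c‖ ^ 2 ≤ r ^ 2 := by nlinarith [norm_nonneg (a - c)]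
  have hx2 : ‖x - c‖ ^ 2 ≤ r ^ 2 := by nlinarith [norm_nonneg (x - c)]
  have hwle : ‖w‖ ^ 2 ≤ r ^ 2 - s := by
    rw [hwsq, hs]
    nlinarith [mul_le_mul_of_nonneg_left ha2 hε1', mul_le_mul_of_nonneg_left hx2 hε0]
  have hsr : s ≤ r ^ 2 := by nlinarith [sq_nonneg ‖w‖]
  set d : ℝ := s / (2 * r) with hdd
  have hd0 : 0 ≤ d := by positivity
  have hd : 2 * r * d = s := by rw [hdd]; field_simp
  have h1 : 0 ≤ r - d := by nlinarith
  have hwr : ‖w‖ ≤ r - d := by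
    have h2 : ‖w‖ ^ 2 ≤ (r - d) ^ 2 := by nlinarith [sq_nonneg d]
    exact (pow_le_pow_iff_left₀ (norm_nonneg w) h1 two_ne_zero).mp h2
  have heq : a + ε • (x - a) + d • u - c = w + d • u := by
    rw [hw]; module
  rw [heq]
  calc ‖w + d • u‖ ≤ ‖w‖ + ‖d • u‖ := norm_add_le _ _
    _ = ‖w‖ + d := by rw [norm_smul, hu, mul_one, Real.norm_eq_abs, abs_of_nonneg hd0]
    _ ≤ r := by linarith

set_option maxHeartbeats 2000000 in
theorem statement_12 {n : ℕ} (A : Set (EuclideanSpace ℝ (Fin n)))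
    (hne : A.Nonempty) (hcl : IsClosed A) (hbd : Bornology.IsBounded A)
    (r : ℝ) (hr : 0 < r) :
    IsStronglyConvex r A ↔
      ∀ a ∈ frontier A, ∀ ζ ∈ proxNormalCone A a, ζ ≠ 0 →
        ∀ x ∈ A, ⟪‖ζ‖⁻¹ • ζ, x - a⟫ ≤ -(1 / (2 * r)) * ‖x - a‖ ^ 2 := by
  constructor
  · intro hsc
    obtain ⟨C, -, hA⟩ := hsc
    rintro a ha ζ ⟨σ, hσ0, hσ⟩ hζ0 x hx
    have haA : a ∈ A := hcl.frontier_subset ha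
    have hζn : 0 < ‖ζ‖ := norm_pos_iff.mpr hζ0
    set u : EuclideanSpace ℝ (Fin n) := ‖ζ‖⁻¹ • ζ with hudef
    have hu1 : ‖u‖ = 1 := norm_smul_inv_norm hζ0
    set ρ : ℝ := ‖x - a‖ with hρ
    have hρ0 : 0 ≤ ρ := norm_nonneg _
    clear_value u ρ
    have hball : ∀ c ∈ C, ∀ y ∈ A, ‖y - c‖ ≤ r := by
      intro c hc y hy
      rw [hA] at hy
      have := Set.mem_iInter₂.mp hy c hc
      rwa [Metric.mem_closedBall, dist_eq_norm] at this
    have hmem : ∀ ε : ℝ, 0 ≤ ε → ε ≤ 1 →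
        a + ε • (x - a) + (ε * (1 - ε) * ρ ^ 2 / (2 * r)) • u ∈ A := by
      intro ε h0 h1
      rw [hA, Set.mem_iInter₂]
      intro c hc
      rw [Metric.mem_closedBall, dist_eq_norm, hρ]
      exact ball_step hr hu1 (hball c hc a haA) (hball c hc x hx) h0 h1
    set L : ℝ := ⟪ζ, x - a⟫ with hL
    set K : ℝ := ‖ζ‖ * ρ ^ 2 / (2 * r) + σ * (ρ + ρ ^ 2 / (2 * r)) ^ 2 with hK
    clear_value L
    have hK0 : 0 ≤ K := add_nonneg (by positivity) (mul_nonneg hσ0 (sq_nonneg _))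
    clear_value K
    have hkey : ∀ ε : ℝ, 0 < ε → ε ≤ 1 → L + ‖ζ‖ * ρ ^ 2 / (2 * r) ≤ ε * K := by
      intro ε h0 h1
      set δ : ℝ := ε * (1 - ε) * ρ ^ 2 / (2 * r) with hδ
      have hδ0 : 0 ≤ δ := by
        rw [hδ]
        exact div_nonneg (mul_nonneg (mul_nonneg h0.le (by linarith)) (sq_nonneg _))
          (by positivity)
      set z : EuclideanSpace ℝ (Fin n) := a + ε • (x - a) + δ • u with hz
      have hzA : z ∈ A := by rw [hz, hδ]; exact hmem ε h0.le h1
      clear_value z δ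
      have hineq := hσ z hzA
      have hza : z - a = ε • (x - a) + δ • u := by rw [hz]; abel
      have hinner : ⟪ζ, z - a⟫ = ε * L + δ * ‖ζ‖ := by
        rw [hza, inner_add_right, real_inner_smul_right, real_inner_smul_right, hudef,
          real_inner_smul_right, real_inner_self_eq_norm_sq]
        have h2 : ‖ζ‖⁻¹ * ‖ζ‖ ^ 2 = ‖ζ‖ := by
          field_simp [pow_two]
        rw [h2, hL]
      have hnorm : ‖z - a‖ ≤ ε * (ρ + ρ ^ 2 / (2 * r)) := by
        have h4 : δ ≤ ε * (ρ ^ 2 / (2 * r)) := by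
          have e1 : δ = (ε * (ρ ^ 2 / (2 * r))) * (1 - ε) := by rw [hδ]; ring
          have e2 : (ε * (ρ ^ 2 / (2 * r))) * (1 - ε) ≤ (ε * (ρ ^ 2 / (2 * r))) * 1 :=
            mul_le_mul_of_nonneg_left (by linarith) (by positivity)
          rw [e1]; linarith
        rw [hza]
        calc ‖ε • (x - a) + δ • u‖ ≤ ‖ε • (x - a)‖ + ‖δ • u‖ := norm_add_le _ _
          _ = ε * ρ + δ := by
              rw [norm_smul, norm_smul, hu1, mul_one, Real.norm_eq_abs, Real.norm_eq_abs,
                abs_of_nonneg h0.le, abs_of_nonneg hδ0, ← hρ]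
          _ ≤ ε * (ρ + ρ ^ 2 / (2 * r)) := by rw [mul_add]; linarith
      have hns : ‖z - a‖ ^ 2 ≤ ε ^ 2 * (ρ + ρ ^ 2 / (2 * r)) ^ 2 := by
        have hB0 : 0 ≤ ε * (ρ + ρ ^ 2 / (2 * r)) := (norm_nonneg _).trans hnorm
        nlinarith [norm_nonneg (z - a)]
      have h5 : ε * L + δ * ‖ζ‖ ≤ σ * (ε ^ 2 * (ρ + ρ ^ 2 / (2 * r)) ^ 2) := by
        rw [hinner] at hineq
        exact hineq.trans (mul_le_mul_of_nonneg_left hns hσ0)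
      rw [hδ] at h5
      have h6 : ε * (L + ‖ζ‖ * ρ ^ 2 / (2 * r)) ≤ ε * (ε * K) := by
        rw [hK]; ring_nf; ring_nf at h5; nlinarith [h5]
      exact le_of_mul_le_mul_left h6 h0
    have hfin : L + ‖ζ‖ * ρ ^ 2 / (2 * r) ≤ 0 := by
      by_contra hc
      push_neg at hc
      set M : ℝ := L + ‖ζ‖ * ρ ^ 2 / (2 * r) with hM
      set ε : ℝ := min 1 (M / (2 * (K + 1))) with hε
      have hε0 : 0 < ε := lt_min one_pos (div_pos hc (by linarith))
      have hε1 : ε ≤ 1 := min_le_left _ _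
      have h10 := hkey ε hε0 hε1
      have h7 : ε * K ≤ M / (2 * (K + 1)) * K :=
        mul_le_mul_of_nonneg_right (min_le_right _ _) hK0
      clear_value M ε
      have h8 : M / (2 * (K + 1)) * K < M := by
        have hden : (0:ℝ) < 2 * (K + 1) := by linarith
        rw [div_mul_eq_mul_div, div_lt_iff₀ hden]
        nlinarith [mul_nonneg hc.le hK0]
      linarith
    have hgoal : ⟪u, x - a⟫ = ‖ζ‖⁻¹ * L := by rw [hudef, real_inner_smul_left, hL]
    rw [hgoal]
    have h9 : L ≤ -(‖ζ‖ * ρ ^ 2 / (2 * r)) := by linarith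
    calc ‖ζ‖⁻¹ * L ≤ ‖ζ‖⁻¹ * (-(‖ζ‖ * ρ ^ 2 / (2 * r))) :=
          mul_le_mul_of_nonneg_left h9 (by positivity)
      _ = -(1 / (2 * r)) * ρ ^ 2 := by
          field_simp
  · intro h
    have claim : ∀ x ∉ A, ∃ c, A ⊆ Metric.closedBall c r ∧ x ∉ Metric.closedBall c r := by
      intro x hx
      obtain ⟨a, haA, hdist⟩ := hcl.exists_infDist_eq_dist hne x
      set t := Metric.infDist x A with htdef
      have ht0 : 0 < t := (hcl.notMem_iff_infDist_pos hne).mp hx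
      have hxa : ‖x - a‖ = t := by rw [hdist, dist_eq_norm]
      set v : EuclideanSpace ℝ (Fin n) := t⁻¹ • (x - a) with hvdef
      have hxav : x - a = t • v := by
        rw [hvdef, smul_smul, mul_inv_cancel₀ ht0.ne', one_smul]
      have hv1 : ‖v‖ = 1 := by
        rw [hvdef, norm_smul, hxa, Real.norm_eq_abs, abs_of_pos (inv_pos.mpr ht0),
          inv_mul_cancel₀ ht0.ne']
      have hv0 : v ≠ 0 := by
        intro hv; rw [hv, norm_zero] at hv1; exact one_ne_zero hv1.symm
      clear_value t v
      have hvcone : v ∈ proxNormalCone A a := by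
        refine ⟨1 / (2 * t), by positivity, fun y hy => ?_⟩
        have h1 : t ≤ dist x y := by rw [htdef]; exact Metric.infDist_le_dist_of_mem hy
        have h2 : ⟪x - a, y - a⟫ ≤ ‖y - a‖ ^ 2 / 2 := by
          have hexp := norm_sub_sq_real (x - a) (y - a)
          have he : x - a - (y - a) = x - y := by abel
          rw [he] at hexp
          have h3 : ‖x - a‖ ≤ ‖x - y‖ := by rw [hxa, ← dist_eq_norm]; exact h1
          nlinarith [norm_nonneg (x - a), norm_nonneg (x - y)]
        rw [hvdef, real_inner_smul_left]
        calc t⁻¹ * ⟪x - a, y - a⟫ ≤ t⁻¹ * (‖y - a‖ ^ 2 / 2) :=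
              mul_le_mul_of_nonneg_left h2 (by positivity)
          _ = 1 / (2 * t) * ‖y - a‖ ^ 2 := by ring
      have hafr : a ∈ frontier A := by
        rw [frontier_eq_closure_inter_closure]
        refine ⟨subset_closure haA, Metric.mem_closure_iff.mpr fun ε hε => ?_⟩
        set m := min (ε / 2) (t / 2) with hm
        have hm0 : 0 < m := lt_min (by linarith) (by linarith)
        have hmε : m < ε := (min_le_left _ _).trans_lt (by linarith)
        have hmt : m < t := (min_le_right _ _).trans_lt (by linarith)
        refine ⟨a + m • v, fun hmem => ?_, ?_⟩
        · have h1 : t ≤ dist x (a + m • v) := by rw [htdef]; exact Metric.infDist_le_dist_of_mem hmem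
          have h2 : x - (a + m • v) = (t - m) • v := by
            have : x - (a + m • v) = (x - a) - m • v := by abel
            rw [this, hxav, ← sub_smul]
          rw [dist_eq_norm, h2, norm_smul, hv1, mul_one, Real.norm_eq_abs,
            abs_of_pos (by linarith)] at h1
          linarith
        · rw [dist_eq_norm]
          have : a - (a + m • v) = -(m • v) := by abel
          rw [this, norm_neg, norm_smul, hv1, mul_one, Real.norm_eq_abs, abs_of_pos hm0]
          exact hmε
      have hkey : ∀ y ∈ A, ⟪v, y - a⟫ ≤ -(1 / (2 * r)) * ‖y - a‖ ^ 2 := by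
        intro y hy
        have := h a hafr v hvcone hv0 y hy
        rwa [hv1, inv_one, one_smul] at this
      refine ⟨a - r • v, fun y hy => ?_, ?_⟩
      · rw [Metric.mem_closedBall, dist_eq_norm]
        have he : y - (a - r • v) = (y - a) + r • v := by abel
        rw [he]
        have hsq : ‖(y - a) + r • v‖ ^ 2 ≤ r ^ 2 := by
          have hexp := norm_add_sq_real (y - a) (r • v)
          rw [real_inner_smul_right, norm_smul, hv1, mul_one, Real.norm_eq_abs,
            abs_of_pos hr, real_inner_comm] at hexp
          have h5 := hkey y hy
          have h6 := mul_le_mul_of_nonneg_left h5 hr.le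
          have h7 : r * (-(1 / (2 * r)) * ‖y - a‖ ^ 2) = -(‖y - a‖ ^ 2) / 2 := by
            field_simp
          rw [h7] at h6
          nlinarith
        exact (pow_le_pow_iff_left₀ (norm_nonneg _) hr.le two_ne_zero).mp hsq
      · rw [Metric.mem_closedBall, dist_eq_norm, not_le]
        have he : x - (a - r • v) = (t + r) • v := by
          have : x - (a - r • v) = (x - a) + r • v := by abel
          rw [this, hxav, ← add_smul]
        rw [he, norm_smul, hv1, mul_one, Real.norm_eq_abs, abs_of_pos (by linarith)]
        linarith
    by_cases hall : ∀ y, y ∈ A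
    · obtain ⟨a0, ha0⟩ := hne
      have hss : ∀ y : EuclideanSpace ℝ (Fin n), y = a0 := by
        intro y
        by_contra hy
        obtain ⟨R, hR⟩ := (Metric.isBounded_iff_subset_closedBall a0).mp hbd
        have hy0 : y - a0 ≠ 0 := sub_ne_zero.mpr hy
        have hn0 : 0 < ‖y - a0‖ := norm_pos_iff.mpr hy0
        set m : ℝ := (|R| + 1) / ‖y - a0‖ with hm
        have hp : a0 + m • (y - a0) ∈ A := hall _
        have hmem := hR hp
        rw [Metric.mem_closedBall, dist_eq_norm] at hmem
        have he : a0 + m • (y - a0) - a0 = m • (y - a0) := by abel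
        rw [he, norm_smul, Real.norm_eq_abs] at hmem
        have hmv : |m| * ‖y - a0‖ = |R| + 1 := by
          rw [abs_of_pos (by positivity), hm, div_mul_cancel₀ _ hn0.ne']
        rw [hmv] at hmem
        linarith [le_abs_self R]
      refine ⟨{a0}, ⟨a0, rfl⟩, ?_⟩
      have hb : (⋂ c ∈ ({a0} : Set (EuclideanSpace ℝ (Fin n))), Metric.closedBall c r) =
          Metric.closedBall a0 r := by simp
      rw [hb]
      ext y
      rw [Metric.mem_closedBall]
      constructor
      · intro _
        rw [hss y, dist_self]
        exact hr.le
      · intro _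
        exact hall y
    · push_neg at hall
      obtain ⟨x0, hx0⟩ := hall
      obtain ⟨c0, hc0, -⟩ := claim x0 hx0
      refine ⟨{c | A ⊆ Metric.closedBall c r}, ⟨c0, hc0⟩, ?_⟩
      apply Set.Subset.antisymm
      · intro y hy
        exact Set.mem_iInter₂.mpr fun c hc => hc hy
      · intro y hy
        by_contra hyA
        obtain ⟨c, hc1, hc2⟩ := claim y hyA
        exact hc2 (Set.mem_iInter₂.mp hy c hc1)
end

section
/- Let A ⊆ ℝⁿ be a nonempty closed bounded set and let r > 0. Then A is r-strongly convex if and only if for every a in the frontier of A and every nonzero ζ ∈ N_A^P(a), the point a belongs to far_A(a − r·ζ/‖ζ‖), i.e. a is a farthest point of A from a − r·ζ/‖ζ‖. -/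
/-! If `A = ⋂_{c ∈ C} B(c, r)` and `a, y ∈ A`, every circular arc of radius `r` from `a` to `y`
lies in `A`: a ball of radius `r` containing both endpoints contains the arc (the radial
projection of the chord onto the circle). A proximal normal `u` of the convex set `A` at `a` is a
normal, so `⟪u, ·⟫` is nonpositive along the tangent at `a` of each such arc; the arc in the plane
of `u` and `y - a` bending towards `u` then gives `‖y - a‖² + 2r⟪u, y - a⟫ ≤ 0`, i.e.
`y ∈ B(a - r u, r)`. Conversely, if `x ∉ A` and `a` is a nearest point of `A` to `x`, then `x - a`
is a proximal normal at the boundary point `a`, and the ball `B(a - r u, r)` with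
`u = (x - a) / ‖x - a‖` contains `A` but not `x`. -/

open scoped RealInnerProductSpace

variable {E : Type*} [NormedAddCommGroup E] [InnerProductSpace ℝ E]

open Metric Set Filter Topology

theorem Continuous.forall_Icc_le_of_forall_Ioo_le {g : ℝ → ℝ} (hg : Continuous g) {c : ℝ}
    (h : ∀ t ∈ Ioo (0 : ℝ) 1, g t ≤ c) : ∀ t ∈ Icc (0 : ℝ) 1, g t ≤ c := by
  rw [← closure_Ioo zero_ne_one]
  exact closure_minimal h (isClosed_le hg continuous_const)

theorem inner_le_zero_of_mem_proxNormalCone {A : Set E} {a ζ v : E}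
    (hζ : ζ ∈ proxNormalCone A a) (hv : ∀ᶠ t in 𝓝[>] (0 : ℝ), a + t • v ∈ A) : ⟪ζ, v⟫ ≤ 0 := by
  obtain ⟨σ, -, hσ⟩ := hζ
  have hle : ∀ᶠ t in 𝓝[>] (0 : ℝ), ⟪ζ, v⟫ ≤ σ * ‖v‖ ^ 2 * t := by
    filter_upwards [hv, self_mem_nhdsWithin] with t ht (htpos : 0 < t)
    have := hσ _ ht
    rw [add_sub_cancel_left, real_inner_smul_right, norm_smul, Real.norm_eq_abs,
      abs_of_pos htpos] at this
    exact le_of_mul_le_mul_left (by linarith) htpos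
  have hlim : Tendsto (fun t => σ * ‖v‖ ^ 2 * t) (𝓝[>] 0) (𝓝 0) := by
    simpa using ((continuous_const_mul (σ * ‖v‖ ^ 2)).tendsto 0).mono_left nhdsWithin_le_nhds
  exact ge_of_tendsto hlim hle

theorem Convex.inner_le_zero_of_mem_proxNormalCone {A : Set E} {a ζ x : E} (hA : Convex ℝ A)
    (ha : a ∈ A) (hζ : ζ ∈ proxNormalCone A a) (hx : x ∈ A) : ⟪ζ, x - a⟫ ≤ 0 :=
  _root_.inner_le_zero_of_mem_proxNormalCone hζ <| by
    filter_upwards [Ioo_mem_nhdsGT zero_lt_one] with t ht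
    exact hA.add_smul_sub_mem ha hx ⟨ht.1.le, ht.2.le⟩

theorem eq_zero_of_mem_proxNormalCone_of_mem_interior {A : Set E} {a ζ : E}
    (ha : a ∈ interior A) (hζ : ζ ∈ proxNormalCone A a) : ζ = 0 := by
  have hline : Tendsto (fun t : ℝ => a + t • ζ) (𝓝 0) (𝓝 a) := by
    simpa using ((continuous_id.smul continuous_const).const_add a).tendsto (0 : ℝ)
  have hmem := (hline.eventually (mem_interior_iff_mem_nhds.1 ha)).filter_mono
    (nhdsWithin_le_nhds (s := Ioi 0))
  exact real_inner_self_nonpos.1 (inner_le_zero_of_mem_proxNormalCone hζ hmem)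

theorem sub_mem_proxNormalCone_of_forall_norm_le {A : Set E} {a x : E}
    (h : ∀ b ∈ A, ‖x - a‖ ≤ ‖x - b‖) : x - a ∈ proxNormalCone A a := by
  refine ⟨1 / 2, by norm_num, fun b hb => ?_⟩
  have hsq := pow_le_pow_left₀ (norm_nonneg _) (h b hb) 2
  rw [show x - b = (x - a) - (b - a) by abel, norm_sub_sq_real (x - a)] at hsq
  linarith

noncomputable def radialProj (c : E) (r : ℝ) (p : E) : E := c + (r / ‖p - c‖) • (p - c)

theorem radialProj_mem_closedBall {a y c₀ c p : E} {r : ℝ} (ha₀ : ‖a - c₀‖ = r)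
    (hy₀ : ‖y - c₀‖ = r) (ha : ‖a - c‖ ≤ r) (hy : ‖y - c‖ ≤ r) (hp : p ∈ segment ℝ a y)
    (hp₀ : p ≠ c₀) : radialProj c₀ r p ∈ closedBall c r := by
  rw [mem_closedBall, dist_eq_norm, radialProj]
  obtain ⟨w, rfl⟩ : ∃ w, c = c₀ + w := ⟨c - c₀, by abel⟩
  have hr : 0 ≤ r := ha₀ ▸ norm_nonneg _
  have half : ∀ x : E, ‖x - c₀‖ = r → ‖x - (c₀ + w)‖ ≤ r → ‖w‖ ^ 2 / 2 ≤ ⟪x - c₀, w⟫ := by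
    intro x hx hxc
    have hsq := pow_le_pow_left₀ (norm_nonneg _) hxc 2
    rw [show x - (c₀ + w) = (x - c₀) - w by abel, norm_sub_sq_real, hx] at hsq
    linarith
  obtain ⟨α, β, hα, hβ, hαβ, hp⟩ := hp
  have hpc : p - c₀ = α • (a - c₀) + β • (y - c₀) :=
    calc p - c₀ = α • a + β • y - (α + β) • c₀ := by rw [hαβ, one_smul, hp]
      _ = α • (a - c₀) + β • (y - c₀) := by module
  have hinner : ‖w‖ ^ 2 / 2 ≤ ⟪p - c₀, w⟫ := by
    rw [hpc, inner_add_left, real_inner_smul_left, real_inner_smul_left]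
    nlinarith [half a ha₀ ha, half y hy₀ hy]
  have hm : ‖p - c₀‖ ≤ r := by
    calc ‖p - c₀‖ ≤ ‖α • (a - c₀)‖ + ‖β • (y - c₀)‖ := hpc ▸ norm_add_le _ _
      _ = r := by
        rw [norm_smul, norm_smul, ha₀, hy₀, Real.norm_of_nonneg hα, Real.norm_of_nonneg hβ,
          ← add_mul, hαβ, one_mul]
  have hm0 : 0 < ‖p - c₀‖ := norm_pos_iff.2 (sub_ne_zero.2 hp₀)
  set m := ‖p - c₀‖
  rw [show c₀ + (r / m) • (p - c₀) - (c₀ + w) = (r / m) • (p - c₀) - w by abel]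
  refine (sq_le_sq₀ (norm_nonneg _) hr).1 ?_
  rw [norm_sub_sq_real, norm_smul, real_inner_smul_left, Real.norm_of_nonneg (by positivity),
    div_mul_cancel₀ r hm0.ne']
  have hrm : 1 ≤ r / m := (one_le_div hm0).2 hm
  nlinarith [sq_nonneg ‖w‖]

theorem sq_norm_add_smul_of_norm_eq {v d : E} {r : ℝ} (hv : ‖v‖ = r) (hvd : ‖v + d‖ = r)
    (s : ℝ) : ‖v + s • d‖ ^ 2 = r ^ 2 - s * (1 - s) * ‖d‖ ^ 2 := by
  have hinner : ⟪v, d⟫ = -‖d‖ ^ 2 / 2 := by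
    have := norm_add_sq_real v d
    rw [hv, hvd] at this
    linarith
  rw [norm_add_sq_real, real_inner_smul_right, norm_smul, Real.norm_eq_abs, mul_pow, sq_abs,
    hv, hinner]
  ring

theorem norm_add_smul_pos_of_norm_eq {v d : E} {r : ℝ} (hv : ‖v‖ = r) (hvd : ‖v + d‖ = r)
    (hd : ‖d‖ < 2 * r) (s : ℝ) : 0 < ‖v + s • d‖ := by
  have hr : 0 ≤ r := hv ▸ norm_nonneg _
  refine lt_of_pow_lt_pow_left₀ 2 (norm_nonneg _) ?_
  rw [sq_norm_add_smul_of_norm_eq hv hvd s]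
  nlinarith [sq_nonneg (s - 1 / 2), sq_nonneg ‖d‖, norm_nonneg d]

theorem inner_arc_tangent_nonpos {u a y c₀ : E} {r : ℝ} (hr : 0 < r) (ha : ‖a - c₀‖ = r)
    (hy : ‖y - c₀‖ = r) (hya : ‖y - a‖ < 2 * r)
    (h : ∀ s ∈ Ioo (0 : ℝ) 1, ⟪u, radialProj c₀ r (a + s • (y - a)) - a⟫ ≤ 0) :
    ‖y - a‖ ^ 2 * ⟪u, a - c₀⟫ + 2 * r ^ 2 * ⟪u, y - a⟫ ≤ 0 := by
  obtain ⟨v, rfl⟩ : ∃ v, c₀ = a - v := ⟨a - c₀, by abel⟩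
  obtain ⟨d, rfl⟩ : ∃ d, y = a + d := ⟨y - a, by abel⟩
  have hsub : ∀ s : ℝ, a + s • d - (a - v) = v + s • d := fun s => by abel
  rw [sub_sub_cancel] at ha ⊢
  rw [show a + d - (a - v) = v + d by abel] at hy
  rw [add_sub_cancel_left] at hya ⊢
  simp only [add_sub_cancel_left, radialProj, hsub,
    show ∀ z : E, a - v + z - a = z - v from fun z => by abel] at h
  -- `g s ≤ 0` is the arc inequality at parameter `s` divided by `s`
  set g : ℝ → ℝ := fun s => (1 - s) * ‖d‖ ^ 2 / (r + ‖v + s • d‖) * ⟪u, v⟫ + r * ⟪u, d⟫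
  have hg : Continuous g := by
    refine (Continuous.mul ?_ continuous_const).add continuous_const
    exact (by fun_prop : Continuous fun s : ℝ => (1 - s) * ‖d‖ ^ 2).div (by fun_prop)
      fun s => by positivity
  have hg0 : g 0 ≤ 0 := by
    refine hg.forall_Icc_le_of_forall_Ioo_le (fun s hs => ?_) 0 ⟨le_rfl, zero_le_one⟩
    have hm := norm_add_smul_pos_of_norm_eq ha hy hya s
    have hm2 := sq_norm_add_smul_of_norm_eq ha hy s
    have harc := h s hs
    set m := ‖v + s • d‖
    rw [inner_sub_right, real_inner_smul_right, inner_add_right, real_inner_smul_right] at harc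
    have hchord : (1 - s) * ‖d‖ ^ 2 / (r + m) = (r - m) / s := by
      rw [div_eq_div_iff (by positivity) hs.1.ne']
      nlinarith
    simp only [g]
    rw [hchord]
    have hscaled : (r - m) * ⟪u, v⟫ + s * (r * ⟪u, d⟫) ≤ 0 := by
      have := mul_nonpos_of_nonneg_of_nonpos hm.le harc
      rw [mul_sub, ← mul_assoc, mul_div_cancel₀ r hm.ne'] at this
      linarith
    calc (r - m) / s * ⟪u, v⟫ + r * ⟪u, d⟫ = ((r - m) * ⟪u, v⟫ + s * (r * ⟪u, d⟫)) / s := by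
          rw [add_div, div_mul_eq_mul_div, mul_div_cancel_left₀ _ hs.1.ne']
      _ ≤ 0 := div_nonpos_of_nonpos_of_nonneg hscaled hs.1.le
  simp only [g, zero_smul, add_zero, ha, sub_zero, one_mul] at hg0
  field_simp at hg0
  linarith

theorem exists_orthogonal_component (u : E) {d : E} (hd : d ≠ 0) :
    ∃ w : E, ⟪w, d⟫ = 0 ∧ ‖w‖ ^ 2 = ‖u‖ ^ 2 - ⟪u, d⟫ ^ 2 / ‖d‖ ^ 2 ∧ ⟪u, w⟫ = ‖w‖ ^ 2 := by
  have hD : ‖d‖ ≠ 0 := norm_ne_zero_iff.2 hd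
  set c := ⟪u, d⟫ / ‖d‖ ^ 2
  have hwd : ⟪u - c • d, d⟫ = 0 := by
    rw [inner_sub_left, real_inner_smul_left, real_inner_self_eq_norm_sq,
      div_mul_cancel₀ _ (pow_ne_zero 2 hD), sub_self]
  have hsplit : u = (u - c • d) + c • d := by abel
  refine ⟨u - c • d, hwd, ?_, ?_⟩
  · have hu := norm_add_sq_real (u - c • d) (c • d)
    rw [← hsplit, real_inner_smul_right, hwd, norm_smul, Real.norm_eq_abs, mul_pow,
      sq_abs] at hu
    have hc : c ^ 2 * ‖d‖ ^ 2 = ⟪u, d⟫ ^ 2 / ‖d‖ ^ 2 := by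
      simp only [c]
      field_simp
    linarith
  · nth_rw 1 [hsplit]
    rw [inner_add_left, real_inner_smul_left, real_inner_comm (u - c • d) d, hwd,
      real_inner_self_eq_norm_sq, mul_zero, add_zero]

theorem sq_add_two_mul_nonpos_of_tangent_ineq {r D b g k : ℝ} (hr : 0 < r) (hD : 0 < D)
    (hk : 0 < k) (hb : b ≤ 0) (hg : 0 ≤ g) (hg2 : g ^ 2 = 1 - b ^ 2 / D ^ 2)
    (hk2 : k ^ 2 = r ^ 2 - D ^ 2 / 4) (h : D ^ 2 * (-1 / 2 * b + k * g) + 2 * r ^ 2 * b ≤ 0) :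
    D ^ 2 + 2 * r * b ≤ 0 := by
  have hbound : D ^ 2 * g ≤ -(2 * k * b) := by
    have htangent : k * (D ^ 2 * g + 2 * k * b) ≤ k * 0 := by nlinarith
    linarith [le_of_mul_le_mul_left htangent hk]
  have hsq4 : (D ^ 2) ^ 2 ≤ (2 * r * b) ^ 2 := by
    have hsq := pow_le_pow_left₀ (by positivity) hbound 2
    rw [mul_pow, hg2, neg_sq, mul_pow, mul_pow, hk2] at hsq
    field_simp at hsq
    nlinarith
  have hD2 : D ^ 2 ≤ -(2 * r * b) :=
    (sq_le_sq₀ (by positivity) (by nlinarith)).1 (by rwa [neg_sq])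
  linarith

theorem sq_norm_add_two_mul_inner_nonpos_of_forall_arc {u d : E} {r : ℝ} (hr : 0 < r)
    (hu : ‖u‖ = 1) (hd : ‖d‖ < 2 * r) (hud : ⟪u, d⟫ ≤ 0)
    (h : ∀ v : E, ‖v‖ = r → ‖v + d‖ = r → ‖d‖ ^ 2 * ⟪u, v⟫ + 2 * r ^ 2 * ⟪u, d⟫ ≤ 0) :
    ‖d‖ ^ 2 + 2 * r * ⟪u, d⟫ ≤ 0 := by
  rcases eq_or_ne d 0 with rfl | hd0
  · simp
  have hD : 0 < ‖d‖ := norm_pos_iff.2 hd0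
  obtain ⟨w, hwd, hw2, huw⟩ := exists_orthogonal_component u hd0
  rw [hu, one_pow] at hw2
  set D := ‖d‖ with hDdef
  set b := ⟪u, d⟫ with hbdef
  rcases eq_or_ne w 0 with hw0 | hw0
  · have hb : b = -D := by
      rw [hw0, norm_zero] at hw2
      field_simp at hw2
      nlinarith
    rw [hb]
    nlinarith
  have hg : 0 < ‖w‖ := norm_pos_iff.2 hw0
  set g := ‖w‖
  set k := Real.sqrt (r ^ 2 - D ^ 2 / 4)
  have hk2 : k ^ 2 = r ^ 2 - D ^ 2 / 4 := Real.sq_sqrt (by nlinarith)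
  have hk : 0 < k := Real.sqrt_pos.2 (by nlinarith)
  have hnorm : ∀ α : ℝ, α ^ 2 = 1 / 4 → ‖α • d + (k / g) • w‖ = r := by
    intro α hα
    refine (sq_eq_sq₀ (norm_nonneg _) hr.le).1 ?_
    rw [norm_add_sq_real, real_inner_smul_left, real_inner_smul_right, real_inner_comm w d, hwd,
      norm_smul, norm_smul, Real.norm_eq_abs, Real.norm_eq_abs, mul_pow, mul_pow, sq_abs, sq_abs,
      ← hDdef, div_pow, hα, hk2]
    field_simp
    ring
  -- `v = a - c₀` for the circle through `a` and `a + d` whose tangent at `a` is closest to `u`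
  have hv := h ((-1 / 2 : ℝ) • d + (k / g) • w) (hnorm _ (by norm_num))
    (by rw [show (-1 / 2 : ℝ) • d + (k / g) • w + d = (1 / 2 : ℝ) • d + (k / g) • w by module]
        exact hnorm _ (by norm_num))
  rw [inner_add_right, real_inner_smul_right, real_inner_smul_right, huw, ← hbdef,
    show k / g * g ^ 2 = k * g by field_simp] at hv
  exact sq_add_two_mul_nonpos_of_tangent_ineq hr hD hk hud hg.le hw2 hk2 hv

theorem radialProj_mem_of_eq_biInter {A C : Set E} {r : ℝ} {a y c₀ p : E}
    (hA : A = ⋂ c ∈ C, closedBall c r) (ha : a ∈ A) (hy : y ∈ A) (ha₀ : ‖a - c₀‖ = r)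
    (hy₀ : ‖y - c₀‖ = r) (hp : p ∈ segment ℝ a y) (hp₀ : p ≠ c₀) :
    radialProj c₀ r p ∈ A := by
  subst hA
  simp only [mem_iInter₂, mem_closedBall, dist_eq_norm] at ha hy
  exact mem_iInter₂.2 fun c hc => radialProj_mem_closedBall ha₀ hy₀ (ha c hc) (hy c hc) hp hp₀

theorem sq_norm_add_two_mul_inner_nonpos_of_eq_biInter {A C : Set E} {r : ℝ} {a u y : E}
    (hr : 0 < r) (hA : A = ⋂ c ∈ C, closedBall c r) (ha : a ∈ A) (hu : ‖u‖ = 1)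
    (hnormal : ∀ x ∈ A, ⟪u, x - a⟫ ≤ 0) (hy : y ∈ A) (hya : ‖y - a‖ < 2 * r) :
    ‖y - a‖ ^ 2 + 2 * r * ⟪u, y - a⟫ ≤ 0 := by
  refine sq_norm_add_two_mul_inner_nonpos_of_forall_arc hr hu hya (hnormal y hy) fun v hv hvd => ?_
  have hc₀ : ∀ x, x - (a - v) = v + (x - a) := fun x => by abel
  have ha₀ : ‖a - (a - v)‖ = r := by rwa [sub_sub_cancel]
  have hy₀ : ‖y - (a - v)‖ = r := by rwa [hc₀]
  simpa only [sub_sub_cancel] using inner_arc_tangent_nonpos hr ha₀ hy₀ hya fun s hs => by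
    have hp : a + s • (y - a) ∈ segment ℝ a y := by
      rw [segment_eq_image']
      exact ⟨s, ⟨hs.1.le, hs.2.le⟩, rfl⟩
    have hp₀ : a + s • (y - a) ≠ a - v := by
      rw [← sub_ne_zero, hc₀, add_sub_cancel_left, ← norm_pos_iff]
      exact norm_add_smul_pos_of_norm_eq hv hvd hya s
    exact hnormal _ (radialProj_mem_of_eq_biInter hA ha hy ha₀ hy₀ hp hp₀)

theorem IsStronglyConvex.subset_closedBall {r : ℝ} {A : Set E} {a ζ : E}
    (hA : IsStronglyConvex r A) (hr : 0 < r) (ha : a ∈ A) (hζ : ζ ∈ proxNormalCone A a)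
    (hζ0 : ζ ≠ 0) : A ⊆ closedBall (a - r • (‖ζ‖⁻¹ • ζ)) r := by
  obtain ⟨C, ⟨c₁, hc₁⟩, hAC⟩ := hA
  have hconv : Convex ℝ A := hAC ▸ convex_iInter₂ fun c _ => convex_closedBall c r
  set u := ‖ζ‖⁻¹ • ζ
  have hu : ‖u‖ = 1 := norm_smul_inv_norm hζ0
  have hnormal : ∀ x ∈ A, ⟪u, x - a⟫ ≤ 0 := fun x hx => by
    rw [real_inner_smul_left]
    exact mul_nonpos_of_nonneg_of_nonpos (by positivity)
      (hconv.inner_le_zero_of_mem_proxNormalCone ha hζ hx)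
  intro y hy
  have hdiam : ‖y - a‖ ≤ 2 * r := by
    have hball : ∀ x ∈ A, ‖x - c₁‖ ≤ r := fun x hx => by
      rw [hAC] at hx
      simpa [dist_eq_norm] using mem_iInter₂.1 hx c₁ hc₁
    calc ‖y - a‖ = ‖(y - c₁) - (a - c₁)‖ := by rw [sub_sub_sub_cancel_right]
      _ ≤ ‖y - c₁‖ + ‖a - c₁‖ := norm_sub_le _ _
      _ ≤ 2 * r := by linarith [hball y hy, hball a ha]
  have hkey : 1 * ‖y - a‖ ^ 2 + 2 * r * ⟪u, y - a⟫ ≤ 0 := by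
    refine (by fun_prop : Continuous fun t : ℝ => t * ‖y - a‖ ^ 2 + 2 * r * ⟪u, y - a⟫)
      |>.forall_Icc_le_of_forall_Ioo_le (fun t ht => ?_) 1 ⟨zero_le_one, le_rfl⟩
    have hyt : a + t • (y - a) ∈ A := hconv.add_smul_sub_mem ha hy ⟨ht.1.le, ht.2.le⟩
    have hyta : ‖a + t • (y - a) - a‖ < 2 * r := by
      rw [add_sub_cancel_left, norm_smul, Real.norm_of_nonneg ht.1.le]
      nlinarith [mul_le_mul_of_nonneg_left hdiam ht.1.le, ht.2]
    have := sq_norm_add_two_mul_inner_nonpos_of_eq_biInter hr hAC ha hu hnormal hyt hyta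
    rw [add_sub_cancel_left, norm_smul, Real.norm_of_nonneg ht.1.le, real_inner_smul_right] at this
    exact nonpos_of_mul_nonpos_left (by nlinarith) ht.1
  rw [mem_closedBall, dist_eq_norm, show y - (a - r • u) = (y - a) + r • u by abel]
  refine (sq_le_sq₀ (norm_nonneg _) hr.le).1 ?_
  rw [norm_add_sq_real, norm_smul, real_inner_smul_right, Real.norm_of_nonneg hr.le, hu,
    real_inner_comm]
  linarith

theorem IsCompact.exists_closedBall_superset_notMem {r : ℝ} {A : Set E} {x : E}
    (hA : IsCompact A)
    (hne : A.Nonempty) (hr : 0 ≤ r)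
    (H : ∀ a ∈ frontier A, ∀ ζ ∈ proxNormalCone A a, ζ ≠ 0 →
      A ⊆ closedBall (a - r • (‖ζ‖⁻¹ • ζ)) r) (hx : x ∉ A) :
    ∃ c, A ⊆ closedBall c r ∧ x ∉ closedBall c r := by
  obtain ⟨a, ha, hmin⟩ :=
    hA.exists_isMinOn hne (continuous_const.sub continuous_id).norm.continuousOn
  have hζ : x - a ∈ proxNormalCone A a :=
    sub_mem_proxNormalCone_of_forall_norm_le fun b hb => hmin hb
  have hζ0 : x - a ≠ 0 := sub_ne_zero.2 (ne_of_mem_of_not_mem ha hx).symm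
  have hfr : a ∈ frontier A :=
    ⟨subset_closure ha, fun hint => hζ0 (eq_zero_of_mem_proxNormalCone_of_mem_interior hint hζ)⟩
  refine ⟨_, H a hfr _ hζ hζ0, ?_⟩
  rw [mem_closedBall, dist_eq_norm, not_le]
  have hd : 0 < ‖x - a‖ := norm_pos_iff.2 hζ0
  rw [show x - (a - r • (‖x - a‖⁻¹ • (x - a))) = (1 + r * ‖x - a‖⁻¹) • (x - a) by module,
    norm_smul, Real.norm_of_nonneg (by positivity), add_mul, one_mul,
    inv_mul_cancel_right₀ hd.ne']
  linarith

theorem isStronglyConvex_of_forall_subset_closedBall {r : ℝ} {A : Set E} (hA : IsCompact A)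
    (hne : A.Nonempty) (hr : 0 ≤ r)
    (H : ∀ a ∈ frontier A, ∀ ζ ∈ proxNormalCone A a, ζ ≠ 0 →
      A ⊆ closedBall (a - r • (‖ζ‖⁻¹ • ζ)) r) :
    IsStronglyConvex r A := by
  refine ⟨{c | A ⊆ closedBall c r}, ?_, ?_⟩
  · by_cases hAu : A = univ
    · have : Subsingleton E := not_nontrivial_iff_subsingleton.1 fun _ =>
        NormedSpace.unbounded_univ ℝ E (hAu ▸ hA.isBounded)
      obtain ⟨a, -⟩ := hne
      exact ⟨a, fun x _ => Subsingleton.elim a x ▸ mem_closedBall_self hr⟩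
    · obtain ⟨x, hx⟩ := (ne_univ_iff_exists_notMem A).1 hAu
      obtain ⟨c, hc, -⟩ := hA.exists_closedBall_superset_notMem hne hr H hx
      exact ⟨c, hc⟩
  · refine Subset.antisymm (fun x hx => mem_iInter₂.2 fun c hc => hc hx) fun x hx => ?_
    by_contra hxA
    obtain ⟨c, hc, hxc⟩ := hA.exists_closedBall_superset_notMem hne hr H hxA
    exact hxc (mem_iInter₂.1 hx c hc)

theorem mem_farPoints_iff {F : Type*} [NormedAddCommGroup F] {A : Set F} {a x : F} :
    a ∈ farPoints A x ↔ a ∈ A ∧ A ⊆ closedBall x ‖x - a‖ := by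
  simp only [farPoints, mem_ofPred_eq, subset_def, mem_closedBall, dist_eq_norm, norm_sub_rev]

theorem statement_13 {n : ℕ} (A : Set (EuclideanSpace ℝ (Fin n)))
    (hne : A.Nonempty) (hcl : IsClosed A) (hbd : Bornology.IsBounded A)
    (r : ℝ) (hr : 0 < r) :
    IsStronglyConvex r A ↔
      ∀ a ∈ frontier A, ∀ ζ ∈ proxNormalCone A a, ζ ≠ 0 →
        a ∈ farPoints A (a - r • (‖ζ‖⁻¹ • ζ)) := by
  have hcenter : ∀ a ζ : EuclideanSpace ℝ (Fin n), ζ ≠ 0 → ‖a - r • (‖ζ‖⁻¹ • ζ) - a‖ = r :=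
    fun a ζ hζ0 => by
      have hu : ‖‖ζ‖⁻¹ • ζ‖ = 1 := norm_smul_inv_norm hζ0
      rw [sub_sub_cancel_left, norm_neg, norm_smul, hu, Real.norm_of_nonneg hr.le, mul_one]
  constructor
  · intro hA a ha ζ hζ hζ0
    have haA := hcl.frontier_subset ha
    rw [mem_farPoints_iff, hcenter a ζ hζ0]
    exact ⟨haA, hA.subset_closedBall hr haA hζ hζ0⟩
  · intro H
    refine isStronglyConvex_of_forall_subset_closedBall
      (Metric.isCompact_of_isClosed_isBounded hcl hbd) hne hr.le fun a ha ζ hζ hζ0 => ?_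
    have hfar := H a ha ζ hζ hζ0
    rw [mem_farPoints_iff, hcenter a ζ hζ0] at hfar
    exact hfar.2
end
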